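/- arXiv:2309.08502 — 11 statements merged into one kernel-verified Lean document; each statement's English description precedes it below -/
import Mathlib

section
/- For each natural number m ≥ 2, the polynomial f(z) = z^m - z^{m-1} - ... - z - 1 is irreducible over the integers. -/
/-!
Every root `z` of `f = X ^ m - ∑ i < m, X ^ i` satisfies `z ^ m * (2 - z) = 1`, since
`(X - 1) * f = X ^ m * (X - 2) + 1`. Hence no root lies on the unit circle (the circles
`‖z‖ = 1` and `‖2 - z‖ = 1` meet only at `1`, and `f(1) = 1 - m`), and every root has
`‖z‖ ^ m ≥ 1 / 3`, while a root with `‖z‖ > 1` has `‖z‖ ^ (2m) > 3 ^ (m - 2)`.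
Since `f` is monic with `f(0) = -1`, the product of `‖z‖ ^ m` over all `m` roots is `1`, so
`f` has at most one root outside the closed unit disk. But a monic factor of positive degree
has constant term `±1`, so the product of the norms of its roots is `1` and, having no root
on the circle, it has a root outside the disk. Two proper factors would give two such roots.
-/

open Polynomial

theorem Multiset.prod_map_lt_one {α R : Type*} [CommMonoidWithZero R] [PartialOrder R]
    [ZeroLEOneClass R] [PosMulMono R] {s : Multiset α} {f : α → R} (hs : s ≠ 0)
    (h0 : ∀ a ∈ s, 0 ≤ f a) (h1 : ∀ a ∈ s, f a < 1) : (s.map f).prod < 1 := by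
  obtain ⟨a, ha⟩ := Multiset.exists_mem_of_ne_zero hs
  obtain ⟨t, rfl⟩ := Multiset.exists_cons_of_mem ha
  have hrest : (t.map f).prod ≤ 1 := by
    simpa using Multiset.prod_map_le_prod_map₀ f (fun _ => 1)
      (fun b hb => h0 b (Multiset.mem_cons_of_mem hb))
      (fun b hb => (h1 b (Multiset.mem_cons_of_mem hb)).le)
  rw [Multiset.map_cons, Multiset.prod_cons]
  exact mul_lt_one_of_nonneg_of_lt_one_left (h0 a ha) (h1 a ha) hrest

theorem Multiset.exists_cons_cons_of_one_lt_card_filter {α : Type*} {p : α → Prop}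
    [DecidablePred p] {s : Multiset α} (h : 1 < (s.filter p).card) :
    ∃ a b t, p a ∧ p b ∧ s = a ::ₘ b ::ₘ t := by
  obtain ⟨a, ha⟩ := Multiset.card_pos_iff_exists_mem.1 (by omega : 0 < (s.filter p).card)
  obtain ⟨B, hB⟩ := Multiset.exists_cons_of_mem ha
  obtain ⟨b, hb⟩ := Multiset.card_pos_iff_exists_mem.1
    (by rw [hB, Multiset.card_cons] at h; omega : 0 < B.card)
  obtain ⟨T, hT⟩ := Multiset.exists_cons_of_mem hb
  have hb' : b ∈ s.filter p := hB ▸ Multiset.mem_cons_of_mem hb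
  refine ⟨a, b, T + s.filter (¬ p ·), (Multiset.mem_filter.1 ha).2,
    (Multiset.mem_filter.1 hb').2, ?_⟩
  rw [← Multiset.cons_add, ← Multiset.cons_add, ← hT, ← hB, Multiset.filter_add_not]

section AlgClosed

variable {R K : Type*} [CommRing R] [NormedField K] [IsAlgClosed K] [Algebra R K]

theorem Polynomial.Monic.prod_norm_aroots {p : R[X]} (hp : p.Monic) :
    ((p.aroots K).map (‖·‖)).prod = ‖algebraMap R K (p.coeff 0)‖ := by
  rw [← coeff_map, (IsAlgClosed.splits _).coeff_zero_eq_prod_roots_of_monic (hp.map _),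
    norm_mul, norm_pow, norm_neg, norm_one, one_pow, one_mul, aroots_def]
  exact (map_multiset_prod (normHom (α := K)).toMonoidHom _).symm

theorem Polynomial.Monic.exists_one_lt_norm_mem_aroots {p : R[X]} (hp : p.Monic)
    (hdeg : 0 < p.natDegree) (hcoeff : 1 ≤ ‖algebraMap R K (p.coeff 0)‖)
    (hcircle : ∀ z ∈ p.aroots K, ‖z‖ ≠ 1) : ∃ z ∈ p.aroots K, 1 < ‖z‖ := by
  by_contra! hinside
  have hne : p.aroots K ≠ 0 := by
    rw [← Multiset.card_pos,
      IsAlgClosed.card_aroots_eq_natDegree_of_isUnit_leadingCoeff (hp.leadingCoeff ▸ isUnit_one)]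
    exact hdeg
  have hlt := Multiset.prod_map_lt_one hne (fun z _ => norm_nonneg z)
    (fun z hz => (hinside z hz).lt_of_ne (hcircle z hz))
  rw [hp.prod_norm_aroots] at hlt
  exact hlt.not_ge hcoeff

end AlgClosed

/-- The characteristic polynomial of the `m`-step Fibonacci recurrence. -/
noncomputable def multinacciPoly (m : ℕ) : ℤ[X] := X ^ m - ∑ i ∈ Finset.range m, X ^ i

theorem Polynomial.degree_geom_sum_X_lt {R : Type*} [Semiring R] (m : ℕ) :
    (∑ i ∈ Finset.range m, (X : R[X]) ^ i).degree < m := by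
  rw [degree_lt_iff_coeff_zero]
  intro k hk
  simp only [finsetSum_coeff, coeff_X_pow]
  exact Finset.sum_eq_zero fun i hi => if_neg (by simp at hi; omega)

theorem multinacciPoly_monic (m : ℕ) : (multinacciPoly m).Monic :=
  monic_X_pow_sub (degree_geom_sum_X_lt m)

theorem natDegree_multinacciPoly (m : ℕ) : (multinacciPoly m).natDegree = m := by
  have hlt : (∑ i ∈ Finset.range m, (X : ℤ[X]) ^ i).degree < (X ^ m : ℤ[X]).degree := by
    rw [degree_X_pow]; exact degree_geom_sum_X_lt m
  exact natDegree_eq_of_degree_eq_some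
    ((degree_sub_eq_left_of_degree_lt hlt).trans (degree_X_pow m))

theorem coeff_zero_multinacciPoly {m : ℕ} (hm : m ≠ 0) : (multinacciPoly m).coeff 0 = -1 := by
  simp [multinacciPoly, coeff_X_pow, Ne.symm hm, Nat.pos_of_ne_zero hm]

theorem X_sub_one_mul_multinacciPoly (m : ℕ) :
    (X - 1) * multinacciPoly m = X ^ m * (X - 2) + 1 := by
  rw [multinacciPoly, mul_sub, mul_geom_sum]
  ring

theorem pow_mul_two_sub_eq_one_of_aeval_multinacciPoly {A : Type*} [CommRing A] {m : ℕ} {z : A}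
    (hz : aeval z (multinacciPoly m) = 0) : z ^ m * (2 - z) = 1 := by
  have := congrArg (aeval z) (X_sub_one_mul_multinacciPoly m)
  simp only [map_mul, map_add, map_sub, map_pow, aeval_X, map_one, map_ofNat, hz, mul_zero] at this
  linear_combination this

theorem aeval_one_multinacciPoly {A : Type*} [CommRing A] (m : ℕ) :
    aeval (1 : A) (multinacciPoly m) = 1 - m := by
  simp [multinacciPoly]

theorem three_le_sq_of_pow_mul_two_sub_le_one {m : ℕ} {r : ℝ} (hm : 3 ≤ m) (hr : 1 < r)
    (h : r ^ m * (2 - r) ≤ 1) : 3 ≤ r ^ 2 := by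
  by_contra! h3
  have hr2 : r < 2 := by nlinarith
  have hcube : r ^ 3 * (2 - r) ≤ 1 :=
    (mul_le_mul_of_nonneg_right (pow_le_pow_right₀ hr.le hm) (by linarith)).trans h
  nlinarith [mul_pos (sub_pos.2 hr) (sub_pos.2 hr)]

theorem Complex.eq_one_of_norm_eq_one_of_norm_two_sub_eq_one {z : ℂ} (h1 : ‖z‖ = 1)
    (h2 : ‖2 - z‖ = 1) : z = 1 := by
  have e1 := congrArg (· ^ 2) h1
  have e2 := congrArg (· ^ 2) h2
  simp only [Complex.sq_norm, Complex.normSq_apply, Complex.sub_re, Complex.sub_im,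
    one_pow] at e1 e2
  norm_num at e2
  apply Complex.ext <;> simp <;> nlinarith

section RootBounds

variable {m : ℕ} {z : ℂ}

theorem norm_pow_mul_norm_two_sub_eq_one (hz : z ^ m * (2 - z) = 1) :
    ‖z‖ ^ m * ‖2 - z‖ = 1 := by
  simpa using congrArg norm hz

theorem one_le_three_mul_norm_pow (hz : z ^ m * (2 - z) = 1) : 1 ≤ 3 * ‖z‖ ^ m := by
  have hnorm := norm_pow_mul_norm_two_sub_eq_one hz
  rcases le_or_gt ‖z‖ 1 with hle | hgt
  · have : ‖2 - z‖ ≤ 3 := by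
      calc ‖2 - z‖ ≤ ‖(2 : ℂ)‖ + ‖z‖ := norm_sub_le _ _
        _ ≤ 3 := by norm_num; linarith
    nlinarith [pow_nonneg (norm_nonneg z) m]
  · nlinarith [one_le_pow₀ (M₀ := ℝ) (n := m) hgt.le]

theorem three_pow_lt_sq_norm_pow (hm : 2 ≤ m) (hz : z ^ m * (2 - z) = 1) (hz1 : 1 < ‖z‖) :
    3 ^ (m - 2) < (‖z‖ ^ m) ^ 2 := by
  rcases hm.eq_or_lt with rfl | hm3
  · simpa using one_lt_pow₀ (one_lt_pow₀ hz1 two_ne_zero) two_ne_zero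
  have hsq : 3 ≤ ‖z‖ ^ 2 := by
    refine three_le_sq_of_pow_mul_two_sub_le_one hm3 hz1 ?_
    rw [← norm_pow_mul_norm_two_sub_eq_one hz]
    gcongr
    simpa using norm_sub_norm_le (2 : ℂ) z
  calc (3 : ℝ) ^ (m - 2) < 3 ^ m := pow_lt_pow_right₀ (by norm_num) (by omega)
    _ ≤ (‖z‖ ^ 2) ^ m := pow_le_pow_left₀ (by norm_num) hsq m
    _ = (‖z‖ ^ m) ^ 2 := by rw [← pow_mul, ← pow_mul, mul_comm]

end RootBounds

theorem norm_ne_one_of_mem_aroots_multinacciPoly {m : ℕ} (hm : 2 ≤ m) {z : ℂ}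
    (hz : z ∈ (multinacciPoly m).aroots ℂ) : ‖z‖ ≠ 1 := by
  intro h1
  have hroot := (mem_aroots.1 hz).2
  have h2 : ‖2 - z‖ = 1 := by
    simpa [h1] using
      norm_pow_mul_norm_two_sub_eq_one (pow_mul_two_sub_eq_one_of_aeval_multinacciPoly hroot)
  rw [Complex.eq_one_of_norm_eq_one_of_norm_two_sub_eq_one h1 h2, aeval_one_multinacciPoly,
    sub_eq_zero] at hroot
  norm_cast at hroot
  omega

theorem prod_norm_pow_aroots_multinacciPoly {m : ℕ} (hm : m ≠ 0) :
    (((multinacciPoly m).aroots ℂ).map (‖·‖ ^ m)).prod = 1 := by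
  rw [Multiset.prod_map_pow, (multinacciPoly_monic m).prod_norm_aroots,
    coeff_zero_multinacciPoly hm]
  simp

theorem card_filter_one_lt_norm_aroots_multinacciPoly_le_one {m : ℕ} (hm : 2 ≤ m) :
    (((multinacciPoly m).aroots ℂ).filter (1 < ‖·‖)).card ≤ 1 := by
  by_contra! htwo
  obtain ⟨z₁, z₂, R, hz₁, hz₂, hA⟩ :=
    Multiset.exists_cons_cons_of_one_lt_card_filter htwo
  have hroot : ∀ z ∈ (multinacciPoly m).aroots ℂ, z ^ m * (2 - z) = 1 := fun z hz =>
    pow_mul_two_sub_eq_one_of_aeval_multinacciPoly (mem_aroots.1 hz).2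
  have hbig₁ := three_pow_lt_sq_norm_pow hm (hroot z₁ (hA ▸ by simp)) hz₁
  have hbig₂ := three_pow_lt_sq_norm_pow hm (hroot z₂ (hA ▸ by simp)) hz₂
  have hcardR : R.card = m - 2 := by
    have := congrArg Multiset.card hA
    rw [IsAlgClosed.card_aroots_eq_natDegree, natDegree_multinacciPoly,
      Multiset.card_cons, Multiset.card_cons] at this
    omega
  have hR : 1 ≤ 3 ^ (m - 2) * (R.map (‖·‖ ^ m)).prod := by
    have := Multiset.one_le_prod_map (s := R) (f := fun z => 3 * ‖z‖ ^ m)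
      fun z hz => one_le_three_mul_norm_pow (hroot z (hA ▸ by simp [hz]))
    rwa [Multiset.prod_map_mul, Multiset.map_const', Multiset.prod_replicate, hcardR] at this
  have hprod := prod_norm_pow_aroots_multinacciPoly (by omega : m ≠ 0)
  rw [hA, Multiset.map_cons, Multiset.map_cons, Multiset.prod_cons, Multiset.prod_cons] at hprod
  set c := (R.map (‖·‖ ^ m)).prod
  have hp : (0 : ℝ) < 3 ^ (m - 2) := by positivity
  have hc : 0 < c := pos_of_mul_pos_right (one_pos.trans_le hR) hp.le
  have hab : ((3 : ℝ) ^ (m - 2)) ^ 2 < (‖z₁‖ ^ m) ^ 2 * (‖z₂‖ ^ m) ^ 2 :=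
    pow_two ((3 : ℝ) ^ (m - 2)) ▸ mul_lt_mul'' hbig₁ hbig₂ hp.le hp.le
  nlinarith [mul_lt_mul_of_pos_right hab (pow_pos hc 2)]

theorem exists_one_lt_norm_mem_aroots_of_dvd_multinacciPoly {m : ℕ} (hm : 2 ≤ m) {g : ℤ[X]}
    (hg : g.Monic) (hdeg : 0 < g.natDegree) (hdvd : g ∣ multinacciPoly m) :
    ∃ z ∈ g.aroots ℂ, 1 < ‖z‖ := by
  obtain ⟨k, hk⟩ := hdvd
  have hunit : IsUnit (g.coeff 0) := by
    refine .of_mul_eq_one (-k.coeff 0) ?_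
    have := congrArg (coeff · 0) hk
    simp only [mul_coeff_zero, coeff_zero_multinacciPoly (by omega : m ≠ 0)] at this
    linarith
  refine hg.exists_one_lt_norm_mem_aroots hdeg ?_ fun z hz =>
    norm_ne_one_of_mem_aroots_multinacciPoly hm (mem_aroots.2 ⟨(multinacciPoly_monic m).ne_zero,
      aeval_eq_zero_of_dvd_aeval_eq_zero ⟨k, hk⟩ (mem_aroots.1 hz).2⟩)
  rcases Int.isUnit_iff.1 hunit with h | h <;> simp [h]

theorem multinacciPoly_irreducible {m : ℕ} (hm : 2 ≤ m) : Irreducible (multinacciPoly m) := by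
  refine (multinacciPoly_monic m).irreducible_iff_natDegree.2
    ⟨fun h => ?_, fun g h hg hh hgh => ?_⟩
  · have := natDegree_multinacciPoly m
    rw [h, natDegree_one] at this
    omega
  by_contra! hdeg
  obtain ⟨z₁, hz₁, hz₁1⟩ := exists_one_lt_norm_mem_aroots_of_dvd_multinacciPoly hm hg
    (Nat.pos_of_ne_zero hdeg.1) (Dvd.intro h hgh)
  obtain ⟨z₂, hz₂, hz₂1⟩ := exists_one_lt_norm_mem_aroots_of_dvd_multinacciPoly hm hh
    (Nat.pos_of_ne_zero hdeg.2) (Dvd.intro_left g hgh)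
  have hle := card_filter_one_lt_norm_aroots_multinacciPoly_le_one hm
  rw [← hgh, aroots_mul (hgh ▸ (multinacciPoly_monic m).ne_zero), Multiset.filter_add,
    Multiset.card_add] at hle
  have h₁ : 0 < ((g.aroots ℂ).filter (1 < ‖·‖)).card :=
    Multiset.card_pos_iff_exists_mem.2 ⟨z₁, Multiset.mem_filter.2 ⟨hz₁, hz₁1⟩⟩
  have h₂ : 0 < ((h.aroots ℂ).filter (1 < ‖·‖)).card :=
    Multiset.card_pos_iff_exists_mem.2 ⟨z₂, Multiset.mem_filter.2 ⟨hz₂, hz₂1⟩⟩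
  omega

open Polynomial in
theorem stmt_0 (m : ℕ) (hm : 2 ≤ m) :
    Irreducible ((X : ℤ[X]) ^ m - ∑ i ∈ Finset.range m, X ^ i) :=
  multinacciPoly_irreducible hm
end

section
/- For m ≥ 2, every zero θ of f(z) = z^m - z^{m-1} - ... - z - 1 other than its unique real zero ζ ∈ (2 - 1/2^{m-1}, 2) satisfies |θ| < 1. -/
/-!
A root θ of f satisfies θ ^ m * (2 - θ) = 1. If ‖θ‖ ≥ 1, the triangle inequality applied to
θ ^ m = ∑ θ ^ i gives ‖θ‖ ^ m * (2 - ‖θ‖) ≥ 1, hence ‖2 - θ‖ ≤ 2 - ‖θ‖, which forces θ to be a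
nonnegative real. But f has only one positive root, because x⁻ᵐ f(x) = 1 - ∑_{k=1}^m x⁻ᵏ is
strictly increasing on (0, ∞).
-/

open Finset

theorem pow_mul_two_sub_eq_one {R : Type*} [CommRing R] {x : R} {m : ℕ}
    (h : x ^ m = ∑ i ∈ range m, x ^ i) : x ^ m * (2 - x) = 1 := by
  linear_combination (1 - x) * h - geom_sum_mul x m

theorem one_le_pow_mul_two_sub {u : ℝ} {m : ℕ} (hu : 1 ≤ u)
    (h : u ^ m ≤ ∑ i ∈ range m, u ^ i) : 1 ≤ u ^ m * (2 - u) := by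
  have := mul_le_mul_of_nonneg_right h (sub_nonneg.2 hu)
  rw [geom_sum_mul] at this
  linarith

theorem norm_two_sub_le_two_sub_norm {K : Type*} [NormedField K] {θ : K} {m : ℕ}
    (hθ : θ ^ m = ∑ i ∈ range m, θ ^ i) (h1 : 1 ≤ ‖θ‖) : ‖2 - θ‖ ≤ 2 - ‖θ‖ := by
  have hprod : ‖θ‖ ^ m * ‖2 - θ‖ = 1 := by
    simpa using congrArg norm (pow_mul_two_sub_eq_one hθ)
  have hsum : ‖θ‖ ^ m ≤ ∑ i ∈ range m, ‖θ‖ ^ i :=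
    calc ‖θ‖ ^ m = ‖∑ i ∈ range m, θ ^ i‖ := by rw [← norm_pow, hθ]
      _ ≤ ∑ i ∈ range m, ‖θ‖ ^ i := by simpa using norm_sum_le (range m) (θ ^ ·)
  refine le_of_mul_le_mul_left ?_ (pow_pos (one_pos.trans_le h1) m)
  rw [hprod]
  exact one_le_pow_mul_two_sub h1 hsum

open scoped ComplexOrder in
theorem Complex.eq_norm_of_norm_sub_le {a : ℝ} {z : ℂ} (h : ‖(a : ℂ) - z‖ ≤ a - ‖z‖) :
    z = ‖z‖ := by
  have hre : a - z.re ≤ ‖(a : ℂ) - z‖ := by simpa using re_le_norm ((a : ℂ) - z)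
  have hz : 0 ≤ z := re_eq_norm.1 <| (re_le_norm z).antisymm (by linarith)
  obtain ⟨-, him⟩ := nonneg_iff.1 hz
  apply Complex.ext <;> simp [← him, re_eq_norm.2 hz]

theorem geom_sum_lt_pow_of_lt {x y : ℝ} {m : ℕ} (hx : 0 < x) (hxy : x < y) (hm : m ≠ 0)
    (h : x ^ m = ∑ i ∈ range m, x ^ i) : ∑ i ∈ range m, y ^ i < y ^ m := by
  set t := y / x
  have ht : 1 < t := (one_lt_div hx).2 hxy
  have hy : y = t * x := (div_mul_cancel₀ y hx.ne').symm
  calc ∑ i ∈ range m, y ^ i = ∑ i ∈ range m, t ^ i * x ^ i := by simp only [hy, mul_pow]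
    _ < ∑ i ∈ range m, t ^ m * x ^ i :=
      sum_lt_sum_of_nonempty (nonempty_range_iff.2 hm) fun i hi =>
        mul_lt_mul_of_pos_right (pow_lt_pow_right₀ ht (mem_range.1 hi)) (pow_pos hx i)
    _ = y ^ m := by rw [← mul_sum, ← h, hy, mul_pow]

theorem eq_of_pow_eq_geom_sum {x y : ℝ} {m : ℕ} (hx : 0 < x) (hy : 0 < y)
    (hxm : x ^ m = ∑ i ∈ range m, x ^ i) (hym : y ^ m = ∑ i ∈ range m, y ^ i) : x = y := by
  have hm : m ≠ 0 := by rintro rfl; simp at hxm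
  rcases lt_trichotomy x y with hxy | hxy | hxy
  · exact absurd hym (geom_sum_lt_pow_of_lt hx hxy hm hxm).ne'
  · exact hxy
  · exact absurd hxm (geom_sum_lt_pow_of_lt hy hxy hm hym).ne'

theorem stmt_2_general (m : ℕ) (ζ : ℝ)
    (hζ₁ : 2 - 1 / 2 ^ (m - 1) < ζ)
    (hζ : ζ ^ m - ∑ i ∈ Finset.range m, ζ ^ i = 0)
    (θ : ℂ) (hθ : θ ^ m - ∑ i ∈ Finset.range m, θ ^ i = 0)
    (hne : θ ≠ (ζ : ℂ)) : ‖θ‖ < 1 := by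
  by_contra! h1
  have hθ' : θ ^ m = ∑ i ∈ range m, θ ^ i := sub_eq_zero.1 hθ
  have hreal : θ = ‖θ‖ :=
    Complex.eq_norm_of_norm_sub_le (a := 2) <| by
      exact_mod_cast norm_two_sub_le_two_sub_norm hθ' h1
  have hζpos : 0 < ζ := by
    have : 1 / (2 : ℝ) ^ (m - 1) ≤ 1 := div_le_one_of_le₀ (one_le_pow₀ one_le_two) (by positivity)
    linarith
  rw [hreal] at hθ'
  have hnorm : ‖θ‖ = ζ :=
    eq_of_pow_eq_geom_sum (by linarith) hζpos (by exact_mod_cast hθ') (sub_eq_zero.1 hζ)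
  exact hne (by rw [hreal, hnorm])

theorem stmt_2 (m : ℕ) (hm : 2 ≤ m) (ζ : ℝ)
    (hζ₁ : 2 - 1 / 2 ^ (m - 1) < ζ) (hζ₂ : ζ < 2)
    (hζ : ζ ^ m - ∑ i ∈ Finset.range m, ζ ^ i = 0)
    (θ : ℂ) (hθ : θ ^ m - ∑ i ∈ Finset.range m, θ ^ i = 0)
    (hne : θ ≠ (ζ : ℂ)) : ‖θ‖ < 1 :=
  stmt_2_general m ζ hζ₁ hζ θ hθ hne
end

section
/- Let f = a_0 + a_1 z + ... + a_m z^m be a polynomial with complex coefficients, let 0 < α < β be real numbers, and let j ∈ {0,1,...,m} be an index such that |a_j| α^j > Σ_{i≠j} |a_i| β^i. Then every complex zero θ of f satisfies |θ| < α or |θ| > β. -/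
/-!
If `|θ|` lay in `[α, β]`, then the vanishing of `∑ aᵢ θⁱ` and the triangle inequality would give
`|a_j| α^j ≤ |a_j| |θ|^j ≤ ∑_{i ≠ j} |a_i| |θ|^i ≤ ∑_{i ≠ j} |a_i| β^i`, contradicting the hypothesis.
-/

open Finset

theorem norm_le_sum_norm_erase_of_sum_eq_zero {ι E : Type*} [DecidableEq ι]
    [SeminormedAddCommGroup E] {s : Finset ι} {v : ι → E} (hs : ∑ i ∈ s, v i = 0) {j : ι}
    (hj : j ∈ s) : ‖v j‖ ≤ ∑ i ∈ s.erase j, ‖v i‖ := by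
  have hvj : v j = -∑ i ∈ s.erase j, v i := by
    rw [eq_neg_iff_add_eq_zero, add_sum_erase s v hj, hs]
  rw [hvj, norm_neg]
  exact norm_sum_le _ _

theorem norm_mul_norm_pow_le_sum_erase_of_sum_eq_zero {K : Type*} [NormedDivisionRing K]
    {s : Finset ℕ} {a : ℕ → K} {θ : K} (hθ : ∑ i ∈ s, a i * θ ^ i = 0) {j : ℕ} (hj : j ∈ s) :
    ‖a j‖ * ‖θ‖ ^ j ≤ ∑ i ∈ s.erase j, ‖a i‖ * ‖θ‖ ^ i := by
  simpa only [norm_mul, norm_pow] using norm_le_sum_norm_erase_of_sum_eq_zero hθ hj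

theorem stmt_4_general (m : ℕ) (a : ℕ → ℂ) (α β : ℝ) (hα : 0 < α)
    (j : ℕ) (hj : j ≤ m)
    (hineq : ‖a j‖ * α ^ j >
      ∑ i ∈ (Finset.range (m + 1)).erase j, ‖a i‖ * β ^ i)
    (θ : ℂ) (hθ : ∑ i ∈ Finset.range (m + 1), a i * θ ^ i = 0) :
    ‖θ‖ < α ∨ β < ‖θ‖ := by
  by_contra! hmid
  obtain ⟨hαθ, hθβ⟩ := hmid
  have hjmem : j ∈ range (m + 1) := mem_range.mpr (Nat.lt_succ_of_le hj)
  refine hineq.not_ge ?_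
  calc ‖a j‖ * α ^ j ≤ ‖a j‖ * ‖θ‖ ^ j := by gcongr
    _ ≤ ∑ i ∈ (range (m + 1)).erase j, ‖a i‖ * ‖θ‖ ^ i :=
      norm_mul_norm_pow_le_sum_erase_of_sum_eq_zero hθ hjmem
    _ ≤ ∑ i ∈ (range (m + 1)).erase j, ‖a i‖ * β ^ i := by gcongr

theorem stmt_4 (m : ℕ) (a : ℕ → ℂ) (α β : ℝ) (hα : 0 < α) (hαβ : α < β)
    (j : ℕ) (hj : j ≤ m)
    (hineq : ‖a j‖ * α ^ j >
      ∑ i ∈ (Finset.range (m + 1)).erase j, ‖a i‖ * β ^ i)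
    (θ : ℂ) (hθ : ∑ i ∈ Finset.range (m + 1), a i * θ ^ i = 0) :
    ‖θ‖ < α ∨ β < ‖θ‖ :=
  stmt_4_general m a α β hα j hj hineq θ hθ
end

section
/- Let f = a_0 + a_1 z + ... + a_m z^m, f_1, f_2 be nonconstant polynomials in ℤ[z] with f = f_1 f_2. Suppose there is a prime p and coprime natural numbers k ≥ 2 and ℓ ≤ m such that p^k divides gcd(a_0, a_1, ..., a_{ℓ-1}) and p^{k+1} does not divide a_0. If p divides f_1(0) and p divides f_2(0), then p divides a_ℓ. -/
/-!
Write `f₁ = ∑ bᵢ zⁱ`, `f₂ = ∑ dᵢ zⁱ` and use the Gauss norm `‖g‖ = maxᵢ |gᵢ|ₚ γⁱ` with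
`γ = p^(-k/ℓ)`, which is multiplicative (Gauss's lemma); `-logₚ ‖g‖ = minᵢ (vₚ(gᵢ) + ik/ℓ)` is
where a line of slope `-k/ℓ` supports the Newton polygon of `g`. The divisibility hypotheses
give `‖f‖ ≤ γ^ℓ = p^(-k) = |a₀|ₚ`. If `p ∤ a_ℓ`, reduction mod `p` gives the first coefficients
`b_u`, `d_w` prime to `p`, with `u + w ≤ ℓ` and `u, w ≥ 1` since `p ∣ b₀, d₀`; hence also
`‖f‖ ≤ γ^u γ^w`. As `‖f₁‖ ≥ |b₀|ₚ, γ^u` and `‖f₂‖ ≥ |d₀|ₚ, γ^w`, multiplicativity forces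
`p^(-vₚ(b₀)) = |b₀|ₚ = γ^u = p^(-ku/ℓ)`, so `ℓ ∣ ku`, hence `ℓ ∣ u` by coprimality,
contradicting `0 < u < ℓ`.
-/

open Polynomial Rat.AbsoluteValue

namespace Polynomial

theorem gaussNorm_le_of_forall_le {R F : Type*} [Semiring R] [FunLike F R ℝ]
    [ZeroHomClass F R ℝ] (v : F) (c : ℝ) {g : R[X]} {B : ℝ}
    (h : ∀ i, v (g.coeff i) * c ^ i ≤ B) : g.gaussNorm v c ≤ B := by
  obtain ⟨i, hi⟩ := g.exists_eq_gaussNorm v c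
  exact hi ▸ h i

variable {R : Type*} [Ring R] {v : AbsoluteValue R ℝ} {c : ℝ}

theorem gaussNorm_eq_of_gaussNorm_mul_le (hna : IsNonarchimedean v) (hc : 0 < c) {g h : R[X]}
    {i j : ℕ} (hgi : g.coeff i ≠ 0) (hhj : h.coeff j ≠ 0)
    (hle : (g * h).gaussNorm v c ≤ v (g.coeff i) * c ^ i * (v (h.coeff j) * c ^ j)) :
    g.gaussNorm v c = v (g.coeff i) * c ^ i := by
  have hx : 0 < v (g.coeff i) * c ^ i := mul_pos (v.pos hgi) (pow_pos hc i)
  have hy : 0 < v (h.coeff j) * c ^ j := mul_pos (v.pos hhj) (pow_pos hc j)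
  have hX := g.le_gaussNorm v hc.le i
  have hY := h.le_gaussNorm v hc.le j
  rw [gaussNorm_mul hna hc] at hle
  nlinarith

theorem apply_coeff_zero_eq_pow_of_gaussNorm_mul_le (hna : IsNonarchimedean v) (hc : 0 < c)
    (hc1 : c ≤ 1) {g h : R[X]} {ℓ u w : ℕ} (hgh : (g * h).gaussNorm v c ≤ c ^ ℓ)
    (h0 : c ^ ℓ ≤ v (g.coeff 0) * v (h.coeff 0)) (hu : v (g.coeff u) = 1)
    (hw : v (h.coeff w) = 1) (huw : u + w ≤ ℓ) :
    v (g.coeff 0) = c ^ u := by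
  have hpos : 0 < v (g.coeff 0) * v (h.coeff 0) := (pow_pos hc ℓ).trans_le h0
  have norm_g_eq_zero := gaussNorm_eq_of_gaussNorm_mul_le hna hc
    (v.pos_iff.mp (pos_of_mul_pos_left hpos (v.nonneg _)))
    (v.pos_iff.mp (pos_of_mul_pos_right hpos (v.nonneg _))) (by simpa using hgh.trans h0)
  have norm_g_eq_u := gaussNorm_eq_of_gaussNorm_mul_le hna hc
    (v.ne_zero_iff.mp (hu ▸ one_ne_zero)) (v.ne_zero_iff.mp (hw ▸ one_ne_zero)) <| by
      rw [hu, hw, one_mul, one_mul, ← pow_add]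
      exact hgh.trans (pow_le_pow_of_le_one hc.le hc1 huw)
  simpa [hu] using norm_g_eq_zero.symm.trans norm_g_eq_u

end Polynomial

namespace Rat.AbsoluteValue

variable {p : ℕ} [Fact p.Prime]

theorem isNonarchimedean_padic : IsNonarchimedean (padic p) := fun a b ↦ by
  simp only [padic_eq_padicNorm]
  exact_mod_cast padicNorm.nonarchimedean

theorem padic_intCast_le_inv_pow_iff {n : ℕ} {z : ℤ} :
    padic p z ≤ ((p : ℝ) ^ n)⁻¹ ↔ (p : ℤ) ^ n ∣ z := by
  rw [← Int.natCast_pow, padicNorm.dvd_iff_norm_le, padic_eq_padicNorm, zpow_neg, zpow_natCast,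
    ← Rat.cast_le (K := ℝ)]
  push_cast
  rfl

theorem padic_intCast_eq_one_iff {z : ℤ} : padic p z = 1 ↔ ¬ (p : ℤ) ∣ z := by
  rw [← padicNorm.int_eq_one_iff, padic_eq_padicNorm]
  exact_mod_cast Iff.rfl

theorem padic_intCast_eq_inv_pow {k : ℕ} {z : ℤ} (hk : (p : ℤ) ^ k ∣ z)
    (hk1 : ¬ (p : ℤ) ^ (k + 1) ∣ z) : padic p z = ((p : ℝ) ^ k)⁻¹ := by
  obtain ⟨w, rfl⟩ := hk
  have hw : ¬ (p : ℤ) ∣ w := fun hw ↦ hk1 (pow_succ (p : ℤ) k ▸ mul_dvd_mul_left _ hw)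
  rw [Int.cast_mul, map_mul, padic_intCast_eq_one_iff.mpr hw, mul_one, Int.cast_pow, map_pow,
    Int.cast_natCast, padic_eq_padicNorm, padicNorm.padicNorm_p_of_prime]
  push_cast
  exact inv_pow _ _

theorem dvd_of_padic_eq_pow {k ℓ u : ℕ} {c : ℝ} (hcop : k.Coprime ℓ) (hc : 0 < c)
    (hcℓ : c ^ ℓ = ((p : ℝ) ^ k)⁻¹) {x : ℚ} (h : padic p x = c ^ u) : ℓ ∣ u := by
  have hx : x ≠ 0 := fun hx ↦ (pow_pos hc u).ne' (by simpa [hx] using h.symm)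
  have hp : (1 : ℝ) < p := by exact_mod_cast (Fact.out : p.Prime).one_lt
  rw [padic_eq_padicNorm, padicNorm.eq_zpow_of_nonzero hx] at h
  push_cast at h
  have hzpow : (p : ℝ) ^ (-padicValRat p x * ℓ) = (p : ℝ) ^ (-(k * u : ℤ)) := by
    rw [zpow_mul, zpow_natCast, h, ← pow_mul, mul_comm, pow_mul, hcℓ, zpow_neg, ← inv_pow,
      ← pow_mul]
    exact inv_pow _ _
  have hval := zpow_right_injective₀ (by positivity) hp.ne' hzpow
  have hdvd : (ℓ : ℤ) ∣ ((k * u : ℕ) : ℤ) :=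
    ⟨padicValRat p x, by push_cast; linear_combination hval⟩
  exact hcop.symm.dvd_of_dvd_mul_left (Int.natCast_dvd_natCast.mp hdvd)

theorem gaussNorm_map_padic_le {k ℓ : ℕ} {c : ℝ} (hc0 : 0 ≤ c) (hc1 : c ≤ 1)
    (hcℓ : c ^ ℓ = ((p : ℝ) ^ k)⁻¹) {F : ℤ[X]} (hdiv : ∀ i < ℓ, (p : ℤ) ^ k ∣ F.coeff i) :
    (F.map (Int.castRingHom ℚ)).gaussNorm (padic p) c ≤ c ^ ℓ := by
  refine gaussNorm_le_of_forall_le _ _ fun i ↦ ?_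
  rw [coeff_map, eq_intCast]
  rcases lt_or_ge i ℓ with hi | hi
  · calc padic p (F.coeff i) * c ^ i ≤ c ^ ℓ * 1 := by
          gcongr
          · rw [hcℓ]; exact padic_intCast_le_inv_pow_iff.mpr (hdiv i hi)
          · exact pow_le_one₀ hc0 hc1
      _ = c ^ ℓ := mul_one _
  · calc padic p (F.coeff i) * c ^ i ≤ 1 * c ^ ℓ :=
          mul_le_mul (padic_le_one p _) (pow_le_pow_of_le_one hc0 hc1 hi) (by positivity)
            zero_le_one
      _ = c ^ ℓ := one_mul _

end Rat.AbsoluteValue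

theorem Real.exists_pos_le_one_pow_eq {x : ℝ} (hx0 : 0 < x) (hx1 : x ≤ 1) {n : ℕ} (hn : n ≠ 0) :
    ∃ c : ℝ, 0 < c ∧ c ≤ 1 ∧ c ^ n = x :=
  ⟨_, Real.rpow_pos_of_pos hx0 _, Real.rpow_le_one hx0.le hx1 (by positivity),
    Real.rpow_inv_natCast_pow hx0.le hn⟩

theorem exists_not_dvd_coeff_of_not_dvd_coeff_mul {p : ℕ} (hp : p.Prime) {f₁ f₂ : ℤ[X]} {ℓ : ℕ}
    (hℓ : ¬ (p : ℤ) ∣ (f₁ * f₂).coeff ℓ) :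
    ∃ u w, u + w ≤ ℓ ∧ ¬ (p : ℤ) ∣ f₁.coeff u ∧ ¬ (p : ℤ) ∣ f₂.coeff w := by
  have := Fact.mk hp
  have not_dvd_iff (g : ℤ[X]) (i : ℕ) :
      ¬ (p : ℤ) ∣ g.coeff i ↔ (g.map (Int.castRingHom (ZMod p))).coeff i ≠ 0 := by
    rw [coeff_map, eq_intCast, Ne, ZMod.intCast_zmod_eq_zero_iff_dvd]
  rw [not_dvd_iff, Polynomial.map_mul] at hℓ
  set g₁ := f₁.map (Int.castRingHom (ZMod p))
  set g₂ := f₂.map (Int.castRingHom (ZMod p))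
  have hg₁ : g₁ ≠ 0 := fun h ↦ hℓ (by simp [h])
  have hg₂ : g₂ ≠ 0 := fun h ↦ hℓ (by simp [h])
  refine ⟨g₁.natTrailingDegree, g₂.natTrailingDegree,
    natTrailingDegree_mul hg₁ hg₂ ▸ natTrailingDegree_le_of_ne_zero hℓ, ?_, ?_⟩
  · exact (not_dvd_iff f₁ _).mpr (mt trailingCoeff_eq_zero.mp hg₁)
  · exact (not_dvd_iff f₂ _).mpr (mt trailingCoeff_eq_zero.mp hg₂)

open Polynomial in
theorem stmt_6_general (f f₁ f₂ : ℤ[X]) (hff : f = f₁ * f₂)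
    (p : ℕ) (hp : p.Prime) (k ℓ : ℕ)
    (hcop : Nat.Coprime k ℓ)
    (hdiv : ∀ i < ℓ, (p : ℤ) ^ k ∣ f.coeff i)
    (hnd : ¬ (p : ℤ) ^ (k + 1) ∣ f.coeff 0)
    (h1 : (p : ℤ) ∣ f₁.eval 0) (h2 : (p : ℤ) ∣ f₂.eval 0) :
    (p : ℤ) ∣ f.coeff ℓ := by
  have := Fact.mk hp
  subst hff
  by_contra hℓ
  obtain ⟨u, w, huw, hu, hw⟩ := exists_not_dvd_coeff_of_not_dvd_coeff_mul hp hℓ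
  rw [← coeff_zero_eq_eval_zero] at h1 h2
  have hu0 : u ≠ 0 := by rintro rfl; exact hu h1
  have hw0 : w ≠ 0 := by rintro rfl; exact hw h2
  obtain ⟨c, hc0, hc1, hcℓ⟩ := Real.exists_pos_le_one_pow_eq (x := ((p : ℝ) ^ k)⁻¹)
    (by have := hp.pos; positivity)
    (inv_le_one_of_one_le₀ (one_le_pow₀ (by exact_mod_cast hp.one_le))) (n := ℓ) (by omega)
  have hb0 : padic p (f₁.coeff 0) = c ^ u := by
    simpa only [coeff_map, eq_intCast] using apply_coeff_zero_eq_pow_of_gaussNorm_mul_le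
      isNonarchimedean_padic hc0 hc1
      (g := f₁.map (Int.castRingHom ℚ)) (h := f₂.map (Int.castRingHom ℚ))
      (by rw [← Polynomial.map_mul]; exact gaussNorm_map_padic_le hc0.le hc1 hcℓ hdiv)
      (by rw [coeff_map, coeff_map, eq_intCast, eq_intCast, ← map_mul, ← Int.cast_mul,
        ← mul_coeff_zero, padic_intCast_eq_inv_pow (hdiv 0 (by omega)) hnd, hcℓ])
      (by rwa [coeff_map, eq_intCast, padic_intCast_eq_one_iff])
      (by rwa [coeff_map, eq_intCast, padic_intCast_eq_one_iff]) huw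
  have := Nat.le_of_dvd (Nat.pos_of_ne_zero hu0) (dvd_of_padic_eq_pow hcop hc0 hcℓ hb0)
  omega

open Polynomial in
theorem stmt_6 (m : ℕ) (f f₁ f₂ : ℤ[X]) (hdeg : f.natDegree = m)
    (hf₁ : 0 < f₁.natDegree) (hf₂ : 0 < f₂.natDegree) (hff : f = f₁ * f₂)
    (p : ℕ) (hp : p.Prime) (k ℓ : ℕ) (hk : 2 ≤ k) (hℓ : 0 < ℓ) (hℓm : ℓ ≤ m)
    (hcop : Nat.Coprime k ℓ)
    (hdiv : ∀ i < ℓ, (p : ℤ) ^ k ∣ f.coeff i)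
    (hnd : ¬ (p : ℤ) ^ (k + 1) ∣ f.coeff 0)
    (h1 : (p : ℤ) ∣ f₁.eval 0) (h2 : (p : ℤ) ∣ f₂.eval 0) :
    (p : ℤ) ∣ f.coeff ℓ :=
  stmt_6_general f f₁ f₂ hff p hp k ℓ hcop hdiv hnd h1 h2
end

section
/- Let f, g ∈ ℤ[X] with deg g = n and deg f = n - d for some d ≥ 1. Let p be a prime dividing neither leading coefficient of f nor of g, and let k be a positive integer coprime to d. If f + p^k g factors as a product of two nonconstant integer polynomials f_1 f_2, then the leading coefficient of f_1 or of f_2 is divisible by p^k. -/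
open Polynomial Finset

/-- Extract, for a nonzero polynomial and a weight function `Φ`, the largest index in the
support attaining the minimum of `Φ` over the support. -/
private lemma exists_min_max (A : Polynomial ℤ) (hA : A ≠ 0) (Φ : ℕ → ℕ) :
    ∃ u ∈ A.support, (∀ i ∈ A.support, Φ u ≤ Φ i) ∧ ∀ i ∈ A.support, u < i → Φ u < Φ i := by
  classical
  have hs : A.support.Nonempty := Polynomial.nonempty_support_iff.mpr hA
  set α := (A.support.image Φ).min' (hs.image Φ) with hα
  obtain ⟨i0, hi0, hΦi0⟩ := Finset.mem_image.mp ((A.support.image Φ).min'_mem (hs.image Φ))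
  set T := A.support.filter (fun i => Φ i = α) with hT
  have hTne : T.Nonempty := ⟨i0, Finset.mem_filter.mpr ⟨hi0, hΦi0⟩⟩
  set u := T.max' hTne with hu
  have huT : u ∈ T := T.max'_mem hTne
  obtain ⟨huA, huα⟩ := Finset.mem_filter.mp huT
  have hmin : ∀ i ∈ A.support, Φ u ≤ Φ i := by
    intro i hi
    rw [huα]
    exact (A.support.image Φ).min'_le _ (Finset.mem_image_of_mem Φ hi)
  refine ⟨u, huA, hmin, ?_⟩
  intro i hi hui
  refine lt_of_le_of_ne (hmin i hi) fun hEq => ?_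
  have hiT : i ∈ T := Finset.mem_filter.mpr ⟨hi, by rw [← hEq, huα]⟩
  exact absurd (T.le_max' i hiT) (not_le.mpr hui)

/-- The core "Dumas" lemma: the coefficient of the product at the sum of the extremal
indices has `p`-adic valuation exactly the sum of the valuations. -/
private lemma key_eq (p d k : ℕ) [Fact p.Prime] (A B : Polynomial ℤ) (u v : ℕ)
    (hAu : A.coeff u ≠ 0) (hBv : B.coeff v ≠ 0)
    (hAmin : ∀ i, A.coeff i ≠ 0 →
      d * padicValInt p (A.coeff u) + k * u ≤ d * padicValInt p (A.coeff i) + k * i)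
    (hAstr : ∀ i, A.coeff i ≠ 0 → u < i →
      d * padicValInt p (A.coeff u) + k * u < d * padicValInt p (A.coeff i) + k * i)
    (hBmin : ∀ i, B.coeff i ≠ 0 →
      d * padicValInt p (B.coeff v) + k * v ≤ d * padicValInt p (B.coeff i) + k * i)
    (hBstr : ∀ i, B.coeff i ≠ 0 → v < i →
      d * padicValInt p (B.coeff v) + k * v < d * padicValInt p (B.coeff i) + k * i) :
    (A * B).coeff (u + v) ≠ 0 ∧
      padicValInt p ((A * B).coeff (u + v))
        = padicValInt p (A.coeff u) + padicValInt p (B.coeff v) := by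
  classical
  set M := padicValInt p (A.coeff u) + padicValInt p (B.coeff v) with hM
  have hmem : ((u, v) : ℕ × ℕ) ∈ antidiagonal (u + v) := by
    simp [Finset.mem_antidiagonal]
  have hsum := Finset.add_sum_erase (antidiagonal (u + v))
      (fun x : ℕ × ℕ => A.coeff x.1 * B.coeff x.2) hmem
  have hrest : (p : ℤ) ^ (M + 1) ∣
      ∑ x ∈ (antidiagonal (u + v)).erase (u, v), A.coeff x.1 * B.coeff x.2 := by
    refine Finset.dvd_sum ?_
    rintro ⟨i, j⟩ hx
    have hij : i + j = u + v := by
      have := Finset.mem_of_mem_erase hx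
      simpa [Finset.mem_antidiagonal] using this
    have hne : (i, j) ≠ (u, v) := Finset.ne_of_mem_erase hx
    by_cases hAi : A.coeff i = 0
    · simp [hAi]
    by_cases hBj : B.coeff j = 0
    · simp [hBj]
    -- show M + 1 ≤ padicValInt p (A.coeff i) + padicValInt p (B.coeff j)
    have hkey : d * M + k * (u + v) + 1
        ≤ d * (padicValInt p (A.coeff i) + padicValInt p (B.coeff j)) + k * (i + j) := by
      have e1 : k * (u + v) = k * u + k * v := by ring
      have e2 : k * (i + j) = k * i + k * j := by ring
      have e3 : d * (padicValInt p (A.coeff i) + padicValInt p (B.coeff j))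
          = d * padicValInt p (A.coeff i) + d * padicValInt p (B.coeff j) := by ring
      have e4 : d * M = d * padicValInt p (A.coeff u) + d * padicValInt p (B.coeff v) := by
        rw [hM]; ring
      rcases lt_trichotomy i u with hlt | heq | hgt
      · have hjv : v < j := by omega
        have h1 := hAmin i hAi
        have h2 := hBstr j hBj hjv
        omega
      · exfalso; apply hne
        have : j = v := by omega
        rw [heq, this]
      · have h1 := hAstr i hAi hgt
        have h2 := hBmin j hBj
        omega
    have hMlt : M + 1 ≤ padicValInt p (A.coeff i) + padicValInt p (B.coeff j) := by
      by_contra hcon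
      push_neg at hcon
      have : padicValInt p (A.coeff i) + padicValInt p (B.coeff j) ≤ M := by omega
      have := Nat.mul_le_mul_left d this
      rw [hij] at hkey
      omega
    calc (p : ℤ) ^ (M + 1)
        ∣ (p : ℤ) ^ (padicValInt p (A.coeff i) + padicValInt p (B.coeff j)) :=
          pow_dvd_pow _ hMlt
      _ = (p : ℤ) ^ padicValInt p (A.coeff i) * (p : ℤ) ^ padicValInt p (B.coeff j) :=
          pow_add _ _ _
      _ ∣ A.coeff i * B.coeff j := mul_dvd_mul (padicValInt_dvd _) (padicValInt_dvd _)
  have hAB0 : A.coeff u * B.coeff v ≠ 0 := mul_ne_zero hAu hBv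
  have hvalAB : padicValInt p (A.coeff u * B.coeff v) = M := padicValInt.mul hAu hBv
  have hnotdvd : ¬ (p : ℤ) ^ (M + 1) ∣ A.coeff u * B.coeff v := by
    rw [padicValInt_dvd_iff]
    push_neg
    exact ⟨hAB0, by rw [hvalAB]; omega⟩
  have hCoeff : (A * B).coeff (u + v)
      = A.coeff u * B.coeff v
        + ∑ x ∈ (antidiagonal (u + v)).erase (u, v), A.coeff x.1 * B.coeff x.2 := by
    rw [Polynomial.coeff_mul, ← hsum]
  have hne0 : (A * B).coeff (u + v) ≠ 0 := by
    intro hzero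
    rw [hCoeff] at hzero
    have : A.coeff u * B.coeff v
        = -∑ x ∈ (antidiagonal (u + v)).erase (u, v), A.coeff x.1 * B.coeff x.2 := by
      linarith
    exact hnotdvd (this ▸ (hrest.neg_right))
  refine ⟨hne0, ?_⟩
  have hdvdM : (p : ℤ) ^ M ∣ (A * B).coeff (u + v) := by
    rw [hCoeff]
    refine dvd_add ?_ (dvd_trans (pow_dvd_pow _ (Nat.le_succ M)) hrest)
    rw [← hvalAB]; exact padicValInt_dvd _
  have hnotdvdM : ¬ (p : ℤ) ^ (M + 1) ∣ (A * B).coeff (u + v) := by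
    intro hdvd
    rw [hCoeff] at hdvd
    have h2 : (p : ℤ) ^ (M + 1) ∣ A.coeff u * B.coeff v := by
      have h3 := dvd_sub hdvd hrest
      simpa using h3
    exact hnotdvd h2
  have h1 : M ≤ padicValInt p ((A * B).coeff (u + v)) := by
    rcases (padicValInt_dvd_iff M _).mp hdvdM with h | h
    · exact absurd h hne0
    · exact h
  have h2 : ¬ (M + 1 ≤ padicValInt p ((A * B).coeff (u + v))) := by
    intro hle
    exact hnotdvdM ((padicValInt_dvd_iff _ _).mpr (Or.inr hle))
  omega

/-- Every coefficient of the product strictly above `u + v` but with index weight below the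
minimal weight line is divisible by `p`. -/
private lemma key_dvd (p d k : ℕ) [Fact p.Prime] (A B : Polynomial ℤ) (u v j : ℕ)
    (hAmin : ∀ i, A.coeff i ≠ 0 →
      d * padicValInt p (A.coeff u) + k * u ≤ d * padicValInt p (A.coeff i) + k * i)
    (hAstr : ∀ i, A.coeff i ≠ 0 → u < i →
      d * padicValInt p (A.coeff u) + k * u < d * padicValInt p (A.coeff i) + k * i)
    (hBmin : ∀ i, B.coeff i ≠ 0 →
      d * padicValInt p (B.coeff v) + k * v ≤ d * padicValInt p (B.coeff i) + k * i)
    (hBstr : ∀ i, B.coeff i ≠ 0 → v < i →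
      d * padicValInt p (B.coeff v) + k * v < d * padicValInt p (B.coeff i) + k * i)
    (hj : u + v < j)
    (hkj : k * j ≤ (d * padicValInt p (A.coeff u) + k * u)
      + (d * padicValInt p (B.coeff v) + k * v)) :
    (p : ℤ) ∣ (A * B).coeff j := by
  classical
  rw [Polynomial.coeff_mul]
  refine Finset.dvd_sum ?_
  rintro ⟨i, j'⟩ hx
  have hij : i + j' = j := by simpa [Finset.mem_antidiagonal] using hx
  by_cases hAi : A.coeff i = 0
  · simp [hAi]
  by_cases hBj : B.coeff j' = 0
  · simp [hBj]
  have hcase : u < i ∨ v < j' := by omega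
  have e0 : k * j = k * i + k * j' := by rw [← hij]; ring
  have hkey : (d * padicValInt p (A.coeff u) + k * u)
      + (d * padicValInt p (B.coeff v) + k * v) + 1
      ≤ d * (padicValInt p (A.coeff i) + padicValInt p (B.coeff j')) + (k * i + k * j') := by
    have e3 : d * (padicValInt p (A.coeff i) + padicValInt p (B.coeff j'))
        = d * padicValInt p (A.coeff i) + d * padicValInt p (B.coeff j') := by ring
    rcases hcase with hgt | hgt
    · have h1 := hAstr i hAi hgt
      have h2 := hBmin j' hBj
      omega
    · have h1 := hAmin i hAi
      have h2 := hBstr j' hBj hgt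
      omega
  have hpos : 1 ≤ padicValInt p (A.coeff i) + padicValInt p (B.coeff j') := by
    by_contra hcon
    push_neg at hcon
    have h0 : padicValInt p (A.coeff i) + padicValInt p (B.coeff j') = 0 := by omega
    rw [h0, Nat.mul_zero] at hkey
    omega
  calc (p : ℤ) ∣ (p : ℤ) ^ (padicValInt p (A.coeff i) + padicValInt p (B.coeff j')) := by
        exact dvd_pow_self _ (by omega)
    _ = (p : ℤ) ^ padicValInt p (A.coeff i) * (p : ℤ) ^ padicValInt p (B.coeff j') :=
        pow_add _ _ _
    _ ∣ A.coeff i * B.coeff j' := mul_dvd_mul (padicValInt_dvd _) (padicValInt_dvd _)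

open Polynomial in
theorem stmt_7 (n d : ℕ) (hd : 1 ≤ d) (hdn : d ≤ n) (f g : ℤ[X])
    (hg : g.natDegree = n) (hf : f.natDegree = n - d) (hf0 : f ≠ 0)
    (p : ℕ) (hp : p.Prime)
    (hpf : ¬ (p : ℤ) ∣ f.leadingCoeff) (hpg : ¬ (p : ℤ) ∣ g.leadingCoeff)
    (k : ℕ) (hk : 0 < k) (hcop : Nat.Coprime k d)
    (f₁ f₂ : ℤ[X]) (hf₁ : 0 < f₁.natDegree) (hf₂ : 0 < f₂.natDegree)
    (hfact : f + (p : ℤ[X]) ^ k * g = f₁ * f₂) :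
    (p : ℤ) ^ k ∣ f₁.leadingCoeff ∨ (p : ℤ) ^ k ∣ f₂.leadingCoeff := by
  classical
  haveI : Fact p.Prime := ⟨hp⟩
  by_contra hcon
  push_neg at hcon
  obtain ⟨hnd1, hnd2⟩ := hcon
  -- basic nonvanishing facts
  have hpZ : ((p : ℤ)) ≠ 0 := Int.natCast_ne_zero.mpr hp.ne_zero
  have hpk0 : ((p : ℤ)) ^ k ≠ 0 := pow_ne_zero _ hpZ
  have hglc : g.leadingCoeff ≠ 0 := fun h0 => hpg (h0 ▸ dvd_zero _)
  have hf1 : f₁ ≠ 0 := fun h0 => by simp [h0] at hf₁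
  have hf2 : f₂ ≠ 0 := fun h0 => by simp [h0] at hf₂
  have hCpk : (p : ℤ[X]) ^ k = C ((p : ℤ) ^ k) := by rw [map_pow, C_eq_natCast]
  set h := f + (p : ℤ[X]) ^ k * g with hh
  have hcoeffh : ∀ j, h.coeff j = f.coeff j + (p : ℤ) ^ k * g.coeff j := by
    intro j
    rw [hh, hCpk, Polynomial.coeff_add, Polynomial.coeff_C_mul]
  have hndlt : f.natDegree < ((p : ℤ[X]) ^ k * g).natDegree := by
    rw [hCpk, natDegree_C_mul hpk0, hg, hf]; omega
  have hdegh : h.natDegree = n := by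
    rw [hh, natDegree_add_eq_right_of_natDegree_lt hndlt, hCpk, natDegree_C_mul hpk0, hg]
  have hfc : ∀ j, n - d < j → f.coeff j = 0 := fun j hj =>
    coeff_eq_zero_of_natDegree_lt (by omega)
  set A := f₁.reverse with hA
  set B := f₂.reverse with hB
  have hH : A * B = h.reverse := by
    rw [hfact, Polynomial.reverse_mul_of_domain]
  have hHC : ∀ j, j ≤ n → (A * B).coeff j = h.coeff (n - j) := by
    intro j hj
    rw [hH, Polynomial.coeff_reverse, hdegh, Polynomial.revAt_le hj]
  -- coefficient facts for H = A * B
  have hHrev0 : (A * B).coeff 0 = (p : ℤ) ^ k * g.leadingCoeff := by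
    rw [hHC 0 (by omega), Nat.sub_zero, hcoeffh, hfc n (by omega), zero_add]
    rw [Polynomial.leadingCoeff, hg]
  have hvpk : padicValInt p ((p : ℤ) ^ k) = k := by
    have hnat : ((p : ℤ) ^ k).natAbs = p ^ k := by
      rw [Int.natAbs_pow, Int.natAbs_natCast]
    rw [padicValInt, hnat, padicValNat.prime_pow]
  have vH0 : padicValInt p ((A * B).coeff 0) = k := by
    rw [hHrev0, padicValInt.mul hpk0 hglc, hvpk, padicValInt.eq_zero_of_not_dvd hpg]
    omega
  have hHd : ¬ (p : ℤ) ∣ (A * B).coeff d := by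
    rw [hHC d hdn, hcoeffh]
    have hflead : f.coeff (n - d) = f.leadingCoeff := by
      rw [Polynomial.leadingCoeff, hf]
    rw [hflead]
    intro hdvd
    have hdvd2 : (p : ℤ) ∣ (p : ℤ) ^ k * g.coeff (n - d) :=
      dvd_mul_of_dvd_left (dvd_pow_self _ hk.ne') _
    exact hpf (by simpa using dvd_sub hdvd hdvd2)
  have hHdne : (A * B).coeff d ≠ 0 := fun h0 => hHd (h0 ▸ dvd_zero _)
  have hHmid : ∀ j, 0 < j → j < d → (p : ℤ) ^ k ∣ (A * B).coeff j := by
    intro j hj0 hjd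
    rw [hHC j (by omega), hcoeffh, hfc (n - j) (by omega), zero_add]
    exact Dvd.intro _ rfl
  -- weight lower bounds
  have Hgt : ∀ j, (A * B).coeff j ≠ 0 → j ≠ 0 → j ≠ d →
      d * k + 1 ≤ d * padicValInt p ((A * B).coeff j) + k * j := by
    intro j hjc hj0 hjd
    rcases lt_or_gt_of_ne hjd with hlt | hgt
    · have hk' : k ≤ padicValInt p ((A * B).coeff j) :=
        ((padicValInt_dvd_iff k _).mp (hHmid j (by omega) hlt)).resolve_left hjc
      have h1 : d * k ≤ d * padicValInt p ((A * B).coeff j) := Nat.mul_le_mul_left d hk'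
      have h2 : k ≤ k * j := Nat.le_mul_of_pos_right k (by omega)
      omega
    · have h1 : k * (d + 1) ≤ k * j := Nat.mul_le_mul_left k hgt
      have h2 : k * (d + 1) = k * d + k := by ring
      have h3 : k * d = d * k := Nat.mul_comm _ _
      omega
  have Hminall : ∀ j, (A * B).coeff j ≠ 0 →
      d * k ≤ d * padicValInt p ((A * B).coeff j) + k * j := by
    intro j hjc
    by_cases hj0 : j = 0
    · subst hj0; rw [vH0]; omega
    by_cases hjd : j = d
    · have h3 : k * j = d * k := by rw [hjd]; ring
      omega
    · have := Hgt j hjc hj0 hjd; omega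
  -- leading coefficients
  have hA0 : A.coeff 0 = f₁.leadingCoeff := Polynomial.coeff_zero_reverse f₁
  have hB0 : B.coeff 0 = f₂.leadingCoeff := Polynomial.coeff_zero_reverse f₂
  have hA0ne : A.coeff 0 ≠ 0 := by rw [hA0]; exact leadingCoeff_ne_zero.mpr hf1
  have hB0ne : B.coeff 0 ≠ 0 := by rw [hB0]; exact leadingCoeff_ne_zero.mpr hf2
  have ha_lt : padicValInt p (A.coeff 0) < k := by
    by_contra hge
    push_neg at hge
    exact hnd1 (by rw [← hA0]; exact (padicValInt_dvd_iff k _).mpr (Or.inr hge))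
  have hb_lt : padicValInt p (B.coeff 0) < k := by
    by_contra hge
    push_neg at hge
    exact hnd2 (by rw [← hB0]; exact (padicValInt_dvd_iff k _).mpr (Or.inr hge))
  have hab : padicValInt p (A.coeff 0) + padicValInt p (B.coeff 0) = k := by
    rw [← padicValInt.mul hA0ne hB0ne, ← Polynomial.mul_coeff_zero, vH0]
  -- extremal indices
  have hAne : A ≠ 0 := by
    rw [hA, Ne, Polynomial.reverse_eq_zero]; exact hf1
  have hBne : B ≠ 0 := by
    rw [hB, Ne, Polynomial.reverse_eq_zero]; exact hf2
  obtain ⟨u, huS, hAmin', hAstr'⟩ :=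
    exists_min_max A hAne (fun i => d * padicValInt p (A.coeff i) + k * i)
  obtain ⟨v, hvS, hBmin', hBstr'⟩ :=
    exists_min_max B hBne (fun i => d * padicValInt p (B.coeff i) + k * i)
  have huc : A.coeff u ≠ 0 := Polynomial.mem_support_iff.mp huS
  have hvc : B.coeff v ≠ 0 := Polynomial.mem_support_iff.mp hvS
  have hAmin : ∀ i, A.coeff i ≠ 0 →
      d * padicValInt p (A.coeff u) + k * u ≤ d * padicValInt p (A.coeff i) + k * i :=
    fun i hi => hAmin' i (Polynomial.mem_support_iff.mpr hi)
  have hAstr : ∀ i, A.coeff i ≠ 0 → u < i →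
      d * padicValInt p (A.coeff u) + k * u < d * padicValInt p (A.coeff i) + k * i :=
    fun i hi => hAstr' i (Polynomial.mem_support_iff.mpr hi)
  have hBmin : ∀ i, B.coeff i ≠ 0 →
      d * padicValInt p (B.coeff v) + k * v ≤ d * padicValInt p (B.coeff i) + k * i :=
    fun i hi => hBmin' i (Polynomial.mem_support_iff.mpr hi)
  have hBstr : ∀ i, B.coeff i ≠ 0 → v < i →
      d * padicValInt p (B.coeff v) + k * v < d * padicValInt p (B.coeff i) + k * i :=
    fun i hi => hBstr' i (Polynomial.mem_support_iff.mpr hi)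
  obtain ⟨Hne, hval⟩ := key_eq p d k A B u v huc hvc hAmin hAstr hBmin hBstr
  -- abbreviations
  set au := padicValInt p (A.coeff u) with hau_def
  set bv := padicValInt p (B.coeff v) with hbv_def
  set a0 := padicValInt p (A.coeff 0) with ha0_def
  set b0 := padicValInt p (B.coeff 0) with hb0_def
  have hS1 : d * k ≤ d * (au + bv) + k * (u + v) := by
    have := Hminall (u + v) Hne
    rwa [hval] at this
  have hα0 : d * au + k * u ≤ d * a0 := by
    have := hAmin 0 hA0ne
    simpa using this
  have hβ0 : d * bv + k * v ≤ d * b0 := by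
    have := hBmin 0 hB0ne
    simpa using this
  have E1 : d * (au + bv) = d * au + d * bv := by ring
  have E2 : k * (u + v) = k * u + k * v := by ring
  have E3 : d * (a0 + b0) = d * a0 + d * b0 := by ring
  have E4 : d * (a0 + b0) = d * k := by rw [hab]
  have heq : d * au + d * bv + (k * u + k * v) = d * k := by omega
  -- u + v is 0 or d
  have hvalueUV : d * padicValInt p ((A * B).coeff (u + v)) + k * (u + v) = d * k := by
    rw [hval]; omega
  have huv0d : u + v = 0 ∨ u + v = d := by
    by_contra hcon2
    push_neg at hcon2
    have := Hgt (u + v) Hne hcon2.1 hcon2.2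
    omega
  have huvd : u + v = d := by
    rcases huv0d with h0 | hdd
    · exfalso
      have hkj : k * d ≤ (d * au + k * u) + (d * bv + k * v) := by
        have h3 : k * d = d * k := Nat.mul_comm _ _
        omega
      exact hHd (key_dvd p d k A B u v d hAmin hAstr hBmin hBstr (by omega) hkj)
    · exact hdd
  -- conclude au = 0 and derive contradiction
  have E5 : k * (u + v) = k * d := by rw [huvd]
  have E6 : k * d = d * k := Nat.mul_comm _ _
  have hdau : d * au = 0 := by omega
  have hau0 : au = 0 := by
    rcases Nat.mul_eq_zero.mp hdau with h0 | h0
    · omega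
    · exact h0
  have hku : k * u = d * a0 := by
    have hdbv : d * bv = 0 := by omega
    omega
  have hddvd : d ∣ u := by
    have hdvd : d ∣ k * u := ⟨a0, hku⟩
    exact Nat.Coprime.dvd_of_dvd_mul_left hcop.symm hdvd
  obtain ⟨c, hc⟩ := hddvd
  rcases Nat.eq_zero_or_pos c with hc0 | hc1
  · -- u = 0, so a0 = 0, so b0 = k, contradiction
    have hu0 : u = 0 := by rw [hc, hc0, Nat.mul_zero]
    have ha00 : d * a0 = 0 := by rw [← hku, hu0, Nat.mul_zero]
    have : a0 = 0 := by
      rcases Nat.mul_eq_zero.mp ha00 with h0 | h0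
      · omega
      · exact h0
    omega
  · -- u = d, so a0 = k, contradiction
    have hdu : d ≤ u := by
      rw [hc]
      exact Nat.le_mul_of_pos_right d hc1
    have hud : u = d := by omega
    have hkda : k * d = d * a0 := by rw [hud] at hku; exact hku
    have ha0k : a0 = k := by
      have h4 : k * d = d * k := Nat.mul_comm _ _
      have : d * k = d * a0 := by omega
      exact (Nat.eq_of_mul_eq_mul_left (by omega) this).symm
    omega
end

section
/- Let f = a_0 + a_1 z + ... + a_m z^m ∈ ℤ[z] be primitive, and suppose there exists α > 0 with |a_m| α^m > |a_0| + |a_1|α + ... + |a_{m-1}| α^{m-1}. If there exist natural numbers n, d, k, ℓ ≤ m and a prime p not dividing d such that n ≥ α + d, f(n) = ± p^k d, gcd(k, ℓ) = 1, p^k divides f^{(i)}(n)/i! for each i = 0,...,ℓ-1, and (when k > 1) p does not divide f^{(ℓ)}(n)/ℓ!, then f is irreducible in ℤ[z]. -/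
/-!
The hypothesis on `α` is a Cauchy-type bound: every complex root of `f` has modulus `< α`. Hence a
factor `g` of positive degree satisfies `|g(n)| = |lc g| ∏ |n - θ| > d`, and since `f(n) = ±p^k d`,
both factors of a nontrivial factorisation `f = a b` have `p ∣ a(n)` and `p ∣ b(n)`. For `k ≤ 1`
this contradicts `p² ∤ f(n)`. For `k > 1`, write `F = a(n + z) b(n + z) = G H` and use the
`p`-adic Gauss norm of slope `k / ℓ`, `‖F‖ = max_i |F_i|_p p^{-k i / ℓ}`, which is multiplicative.
The hypotheses give `‖F‖ = |F_0|_p = |G_0|_p |H_0|_p`, so `G` and `H` attain their Gauss norms at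
their constant terms; as `gcd(k, ℓ) = 1`, no coefficient of index `0 < i < ℓ` attains it as well,
and then every term `G_i H_{ℓ-i}` of `F_ℓ` is divisible by `p`, contradicting `p ∤ F_ℓ`.
-/

open Polynomial

lemma Polynomial.gaussNorm_le_of_gaussNorm_mul_le {R : Type*} [Ring R] {v : AbsoluteValue R ℝ}
    (hna : IsNonarchimedean v) {c : ℝ} (hc : 0 < c) {G H : R[X]}
    (h : (G * H).gaussNorm v c ≤ v (G.coeff 0) * v (H.coeff 0)) (hH : 0 < v (H.coeff 0)) :
    G.gaussNorm v c ≤ v (G.coeff 0) := by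
  have hH' : v (H.coeff 0) ≤ H.gaussNorm v c := by simpa using H.le_gaussNorm v hc.le 0
  refine le_of_mul_le_mul_right ?_ (hH.trans_le hH')
  calc G.gaussNorm v c * H.gaussNorm v c = (G * H).gaussNorm v c := (gaussNorm_mul hna hc G H).symm
    _ ≤ v (G.coeff 0) * v (H.coeff 0) := h
    _ ≤ v (G.coeff 0) * H.gaussNorm v c := mul_le_mul_of_nonneg_left hH' (v.nonneg _)

section PadicAbv

variable (p : ℕ) [Fact p.Prime]

noncomputable def padicIntAbv : AbsoluteValue ℤ ℝ where
  toFun x := ‖(x : ℚ_[p])‖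
  map_mul' x y := by simp
  nonneg' _ := norm_nonneg _
  eq_zero' x := by simp
  add_le' x y := by simpa using norm_add_le (x : ℚ_[p]) y

variable {p}

lemma padicIntAbv_apply (x : ℤ) : padicIntAbv p x = ‖(x : ℚ_[p])‖ := rfl

lemma isNonarchimedean_padicIntAbv : IsNonarchimedean (padicIntAbv p) := fun x y => by
  simpa [padicIntAbv_apply] using Padic.nonarchimedean (x : ℚ_[p]) y

lemma padicIntAbv_le_one (x : ℤ) : padicIntAbv p x ≤ 1 := Padic.norm_int_le_one x

lemma padicIntAbv_lt_one_iff {x : ℤ} : padicIntAbv p x < 1 ↔ (p : ℤ) ∣ x :=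
  Padic.norm_intCast_lt_one_iff

lemma padicIntAbv_pow_mul {u : ℤ} (hu : ¬ (p : ℤ) ∣ u) (k : ℕ) :
    padicIntAbv p ((p : ℤ) ^ k * u) = ((p : ℝ) ^ k)⁻¹ := by
  have hu1 : padicIntAbv p u = 1 :=
    (padicIntAbv_le_one u).antisymm (not_lt.mp (mt padicIntAbv_lt_one_iff.mp hu))
  rw [map_mul, hu1, mul_one, map_pow, padicIntAbv_apply, Int.cast_natCast, Padic.norm_p, inv_pow]

lemma padicIntAbv_le_of_pow_dvd {x : ℤ} {k : ℕ} (h : (p : ℤ) ^ k ∣ x) :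
    padicIntAbv p x ≤ ((p : ℝ) ^ k)⁻¹ := by
  obtain ⟨u, rfl⟩ := h
  rw [map_mul, map_pow, padicIntAbv_apply, Int.cast_natCast, Padic.norm_p, inv_pow]
  exact mul_le_of_le_one_right (by positivity) (padicIntAbv_le_one u)

lemma Padic.valuation_eq_of_norm_eq {x y : ℚ_[p]} (hx : x ≠ 0) (hy : y ≠ 0) (h : ‖x‖ = ‖y‖) :
    x.valuation = y.valuation := by
  have hp : (1 : ℝ) < p := by exact_mod_cast (Fact.out : p.Prime).one_lt
  rw [Padic.norm_eq_zpow_neg_valuation hx, Padic.norm_eq_zpow_neg_valuation hy] at h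
  exact neg_inj.mp (zpow_right_injective₀ (by positivity) hp.ne' h)

/-- Here `c = p^(-k/ℓ)`, and equality would mean `ℓ v_p(x) + k i = ℓ v_p(y)`, so `ℓ ∣ k i`. -/
lemma padicIntAbv_mul_pow_ne {k ℓ i : ℕ} (hcop : k.Coprime ℓ) {c : ℝ}
    (hc : c ^ ℓ = ((p : ℝ) ^ k)⁻¹) (hi : 0 < i) (hiℓ : i < ℓ) (x : ℤ) {y : ℤ} (hy : y ≠ 0) :
    padicIntAbv p x * c ^ i ≠ padicIntAbv p y := by
  intro h
  have hx : x ≠ 0 := by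
    rintro rfl
    exact hy ((padicIntAbv p).eq_zero.mp (by simpa using h.symm))
  have hp : (p : ℚ_[p]) ≠ 0 := by exact_mod_cast (Fact.out : p.Prime).ne_zero
  have hx' : (x : ℚ_[p]) ^ ℓ ≠ 0 := pow_ne_zero ℓ (by simpa using hx)
  have hnorm : ‖(x : ℚ_[p]) ^ ℓ * (p : ℚ_[p]) ^ (k * i)‖ = ‖(y : ℚ_[p]) ^ ℓ‖ := by
    rw [norm_mul, norm_pow, norm_pow, norm_pow, Padic.norm_p, ← padicIntAbv_apply,
      ← padicIntAbv_apply, ← h, mul_pow, ← pow_mul, mul_comm i ℓ, pow_mul c, hc, pow_mul, inv_pow]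
  have hval := Padic.valuation_eq_of_norm_eq (mul_ne_zero hx' (pow_ne_zero _ hp))
    (pow_ne_zero ℓ (by simpa using hy)) hnorm
  rw [Padic.valuation_mul hx' (pow_ne_zero _ hp), Padic.valuation_pow, Padic.valuation_pow,
    Padic.valuation_pow, Padic.valuation_p] at hval
  have hdvd : (ℓ : ℤ) ∣ (k * i : ℕ) :=
    ⟨(y : ℚ_[p]).valuation - (x : ℚ_[p]).valuation, by linear_combination hval⟩
  have hℓi : ℓ ∣ i := hcop.symm.dvd_of_dvd_mul_left (Int.natCast_dvd_natCast.mp hdvd)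
  exact absurd (Nat.le_of_dvd hi hℓi) (not_le.mpr hiℓ)

lemma padicIntAbv_coeff_mul_pow_lt {k ℓ : ℕ} (hcop : k.Coprime ℓ) {c : ℝ} (hc0 : 0 ≤ c)
    (hc : c ^ ℓ = ((p : ℝ) ^ k)⁻¹) {G : ℤ[X]}
    (hG : G.gaussNorm (padicIntAbv p) c ≤ padicIntAbv p (G.coeff 0))
    (hG0 : c ^ ℓ < padicIntAbv p (G.coeff 0)) {i : ℕ} (hi : 0 < i) (hiℓ : i ≤ ℓ) :
    padicIntAbv p (G.coeff i) * c ^ i < padicIntAbv p (G.coeff 0) := by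
  rcases hiℓ.lt_or_eq with hiℓ | rfl
  · have hG0' : G.coeff 0 ≠ 0 := by
      rintro h
      rw [h, map_zero] at hG0
      exact (hG0.trans_le' (by positivity)).false
    exact ((G.le_gaussNorm _ hc0 i).trans hG).lt_of_ne
      (padicIntAbv_mul_pow_ne hcop hc hi hiℓ _ hG0')
  · exact (mul_le_of_le_one_left (by positivity) (padicIntAbv_le_one _)).trans_lt hG0

lemma gaussNorm_padicIntAbv_le {k ℓ : ℕ} (hℓ : 0 < ℓ) {c : ℝ} (hc0 : 0 ≤ c)
    (hc : c ^ ℓ = ((p : ℝ) ^ k)⁻¹) {F : ℤ[X]} (hF : ∀ i < ℓ, (p : ℤ) ^ k ∣ F.coeff i) :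
    F.gaussNorm (padicIntAbv p) c ≤ c ^ ℓ := by
  have hc1 : c ≤ 1 := (pow_le_one_iff_of_nonneg hc0 hℓ.ne').mp
    (hc ▸ inv_le_one_of_one_le₀ (one_le_pow₀ (by exact_mod_cast (Fact.out : p.Prime).one_le)))
  obtain ⟨i, hi⟩ := F.exists_eq_gaussNorm (padicIntAbv p) c
  rw [hi]
  rcases lt_or_ge i ℓ with hiℓ | hiℓ
  · exact (mul_le_of_le_one_right (by positivity) (pow_le_one₀ hc0 hc1)).trans
      (hc ▸ padicIntAbv_le_of_pow_dvd (hF i hiℓ))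
  · exact (mul_le_of_le_one_left (by positivity) (padicIntAbv_le_one _)).trans
      (pow_le_pow_of_le_one hc0 hc1 hiℓ)

lemma prime_dvd_coeff_mul_of_gaussNorm_le {k ℓ : ℕ} (hℓ : 0 < ℓ) (hcop : k.Coprime ℓ) {c : ℝ}
    (hc0 : 0 < c)
    (hc : c ^ ℓ = ((p : ℝ) ^ k)⁻¹) {G H : ℤ[X]} (hG : (p : ℤ) ∣ G.coeff 0)
    (hH : (p : ℤ) ∣ H.coeff 0)
    (hGH : padicIntAbv p (G.coeff 0) * padicIntAbv p (H.coeff 0) = c ^ ℓ)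
    (hNG : G.gaussNorm (padicIntAbv p) c ≤ padicIntAbv p (G.coeff 0))
    (hNH : H.gaussNorm (padicIntAbv p) c ≤ padicIntAbv p (H.coeff 0)) :
    (p : ℤ) ∣ (G * H).coeff ℓ := by
  set v := padicIntAbv p
  have hG0 : 0 < v (G.coeff 0) := (v.nonneg _).lt_of_ne fun h =>
    (pow_pos hc0 ℓ).ne' (by rw [← hGH, ← h, zero_mul])
  have hH0 : 0 < v (H.coeff 0) := (v.nonneg _).lt_of_ne fun h =>
    (pow_pos hc0 ℓ).ne' (by rw [← hGH, ← h, mul_zero])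
  have hGℓ : c ^ ℓ < v (G.coeff 0) :=
    hGH ▸ mul_lt_of_lt_one_right hG0 (padicIntAbv_lt_one_iff.mpr hH)
  have hHℓ : c ^ ℓ < v (H.coeff 0) :=
    hGH ▸ mul_lt_of_lt_one_left hH0 (padicIntAbv_lt_one_iff.mpr hG)
  rw [coeff_mul]
  refine Finset.dvd_sum fun x hx => padicIntAbv_lt_one_iff.mp ?_
  rw [Finset.HasAntidiagonal.mem_antidiagonal] at hx
  have hterm : v (G.coeff x.1) * c ^ x.1 * (v (H.coeff x.2) * c ^ x.2) <
      v (G.coeff 0) * v (H.coeff 0) := by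
    rcases Nat.eq_zero_or_pos x.1 with h0 | h0
    · rw [h0, pow_zero, mul_one]
      exact mul_lt_mul_of_pos_left (padicIntAbv_coeff_mul_pow_lt hcop hc0.le hc hNH hHℓ
        (by omega) (by omega)) hG0
    · exact mul_lt_mul_of_lt_of_le_of_nonneg_of_pos
        (padicIntAbv_coeff_mul_pow_lt hcop hc0.le hc hNG hGℓ h0 (by omega))
        ((H.le_gaussNorm v hc0.le _).trans hNH) (by positivity) hH0
  refine lt_of_mul_lt_mul_right (a := c ^ ℓ) ?_ (by positivity)
  calc v (G.coeff x.1 * H.coeff x.2) * c ^ ℓ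
      = v (G.coeff x.1) * c ^ x.1 * (v (H.coeff x.2) * c ^ x.2) := by
        rw [map_mul, ← hx, pow_add]; ring
    _ < v (G.coeff 0) * v (H.coeff 0) := hterm
    _ = 1 * c ^ ℓ := by rw [one_mul, hGH]

end PadicAbv

theorem Polynomial.prime_dvd_coeff_mul_of_coprime {p : ℕ} [Fact p.Prime] {k ℓ : ℕ} (hℓ : 0 < ℓ)
    (hcop : k.Coprime ℓ) {G H : ℤ[X]} (hG : (p : ℤ) ∣ G.coeff 0) (hH : (p : ℤ) ∣ H.coeff 0)
    (hF0 : ¬ (p : ℤ) ^ (k + 1) ∣ (G * H).coeff 0) (hF : ∀ i < ℓ, (p : ℤ) ^ k ∣ (G * H).coeff i) :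
    (p : ℤ) ∣ (G * H).coeff ℓ := by
  set v := padicIntAbv p
  set c : ℝ := ((p : ℝ) ^ k)⁻¹ ^ (ℓ⁻¹ : ℝ)
  have hp : (0 : ℝ) < p := by exact_mod_cast (Fact.out : p.Prime).pos
  have hc0 : 0 < c := by positivity
  have hc : c ^ ℓ = ((p : ℝ) ^ k)⁻¹ := Real.rpow_inv_natCast_pow (by positivity) hℓ.ne'
  have hGH : v (G.coeff 0) * v (H.coeff 0) = c ^ ℓ := by
    obtain ⟨u, hu⟩ := hF 0 hℓ
    have hpu : ¬ (p : ℤ) ∣ u := fun ⟨w, hw⟩ => hF0 ⟨w, by rw [hu, hw, pow_succ, mul_assoc]⟩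
    rw [← map_mul, ← mul_coeff_zero, hu, padicIntAbv_pow_mul hpu, hc]
  have hN : (G * H).gaussNorm v c ≤ v (G.coeff 0) * v (H.coeff 0) :=
    hGH ▸ gaussNorm_padicIntAbv_le hℓ hc0.le hc hF
  have hG0 : 0 < v (G.coeff 0) := (padicIntAbv p).pos fun h => by simp [h] at hF0
  have hH0 : 0 < v (H.coeff 0) := (padicIntAbv p).pos fun h => by simp [h] at hF0
  exact prime_dvd_coeff_mul_of_gaussNorm_le hℓ hcop hc0 hc hG hH hGH
    (gaussNorm_le_of_gaussNorm_mul_le isNonarchimedean_padicIntAbv hc0 hN hH0)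
    (gaussNorm_le_of_gaussNorm_mul_le isNonarchimedean_padicIntAbv hc0
      (by rwa [mul_comm H, mul_comm (v _)]) hG0)

theorem Polynomial.norm_lt_of_isRoot {K : Type*} [NormedField K] {f : K[X]} {α : ℝ} (hα : 0 < α)
    (hf : ∑ i ∈ Finset.range f.natDegree, ‖f.coeff i‖ * α ^ i < ‖f.leadingCoeff‖ * α ^ f.natDegree)
    {θ : K} (hθ : f.IsRoot θ) : ‖θ‖ < α := by
  by_contra! hθα
  set m := f.natDegree
  set t := ‖θ‖ / α
  have ht : 1 ≤ t := (one_le_div hα).mpr hθα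
  have hθt : ‖θ‖ = α * t := (mul_div_cancel₀ _ hα.ne').symm
  have hlead : f.leadingCoeff * θ ^ m = -∑ i ∈ Finset.range m, f.coeff i * θ ^ i := by
    have := hθ.eq_zero
    rw [eval_eq_sum_range, Finset.sum_range_succ] at this
    exact eq_neg_of_add_eq_zero_right this
  have := calc ‖f.leadingCoeff‖ * ‖θ‖ ^ m
      = ‖∑ i ∈ Finset.range m, f.coeff i * θ ^ i‖ := by rw [← norm_pow, ← norm_mul, hlead, norm_neg]
    _ ≤ ∑ i ∈ Finset.range m, ‖f.coeff i‖ * α ^ i * t ^ i :=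
        (norm_sum_le _ _).trans_eq <| Finset.sum_congr rfl fun i _ => by
          rw [norm_mul, norm_pow, hθt, mul_pow, mul_assoc]
    _ ≤ ∑ i ∈ Finset.range m, ‖f.coeff i‖ * α ^ i * t ^ m :=
        Finset.sum_le_sum fun i hi =>
          mul_le_mul_of_nonneg_left (pow_le_pow_right₀ ht (Finset.mem_range.mp hi).le)
            (by positivity)
    _ < ‖f.leadingCoeff‖ * α ^ m * t ^ m := by
        rw [← Finset.sum_mul]; exact mul_lt_mul_of_pos_right hf (by positivity)
    _ = ‖f.leadingCoeff‖ * ‖θ‖ ^ m := by rw [hθt, mul_pow, mul_assoc]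
  exact this.false

theorem Polynomial.Splits.lt_norm_eval {K : Type*} [NormedField K] {g : K[X]} (hg : g.Splits)
    (hdeg : 0 < g.natDegree) (hlead : 1 ≤ ‖g.leadingCoeff‖) {α d : ℝ} (hd : 1 ≤ d)
    (hroots : ∀ θ ∈ g.roots, ‖θ‖ < α) {z : K} (hz : α + d ≤ ‖z‖) : d < ‖g.eval z‖ := by
  have hfac : ∀ θ ∈ g.roots, d < ‖z - θ‖ := fun θ hθ =>
    calc d < ‖z‖ - ‖θ‖ := by linarith [hroots θ hθ]
      _ ≤ ‖z - θ‖ := norm_sub_norm_le z θ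
  obtain ⟨θ, hθ⟩ := Multiset.card_pos_iff_exists_mem.mp (hg.natDegree_eq_card_roots ▸ hdeg)
  obtain ⟨s, hs⟩ := Multiset.exists_cons_of_mem hθ
  have hs1 : 1 ≤ (s.map fun a => ‖z - a‖).prod :=
    Multiset.one_le_prod fun _ hx => by
      obtain ⟨a, ha, rfl⟩ := Multiset.mem_map.mp hx
      exact hd.trans (hfac a (hs ▸ Multiset.mem_cons_of_mem ha)).le
  have hprod : ‖(s.map (z - ·)).prod‖ = (s.map fun a => ‖z - a‖).prod :=
    (Multiset.prod_hom' s (normHom : K →*₀ ℝ) (z - ·)).symm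
  rw [hg.eval_eq_prod_roots, norm_mul, hs, Multiset.map_cons, Multiset.prod_cons, norm_mul, hprod]
  calc d < ‖z - θ‖ := hfac θ hθ
    _ ≤ ‖z - θ‖ * (s.map fun a => ‖z - a‖).prod := le_mul_of_one_le_right (norm_nonneg _) hs1
    _ ≤ ‖g.leadingCoeff‖ * (‖z - θ‖ * (s.map fun a => ‖z - a‖).prod) :=
      le_mul_of_one_le_left (by positivity) hlead

theorem Polynomial.lt_abs_eval_of_dvd {f g : ℤ[X]} (hgf : g ∣ f) (hg : 0 < g.natDegree) {α : ℝ}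
    (hα : 0 < α) (hf : ∑ i ∈ Finset.range f.natDegree, (|f.coeff i| : ℝ) * α ^ i <
      (|f.leadingCoeff| : ℝ) * α ^ f.natDegree)
    {d : ℕ} (hd : 0 < d) {z : ℤ} (hz : α + d ≤ |(z : ℝ)|) : (d : ℤ) < |g.eval z| := by
  set φ := Int.castRingHom ℂ
  have hφ : Function.Injective φ := Int.cast_injective
  have hroots : ∀ θ ∈ (g.map φ).roots, ‖θ‖ < α := by
    intro θ hθ
    refine norm_lt_of_isRoot hα ?_ ((isRoot_of_mem_roots hθ).dvd (map_dvd φ hgf))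
    simpa [natDegree_map_eq_of_injective hφ, leadingCoeff_map_of_injective hφ, φ] using hf
  have hlead : 1 ≤ ‖(g.map φ).leadingCoeff‖ := by
    simpa [leadingCoeff_map_of_injective hφ, φ] using (Int.cast_le (R := ℝ)).mpr
      (Int.one_le_abs (leadingCoeff_ne_zero.mpr (ne_zero_of_natDegree_gt hg)))
  have key := (IsAlgClosed.splits (g.map φ)).lt_norm_eval
    (by rwa [natDegree_map_eq_of_injective hφ]) hlead (Nat.one_le_cast.mpr hd) hroots
    (z := (z : ℂ)) (by simpa using hz)
  rw [eval_intCast_map, eq_intCast, Complex.norm_intCast] at key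
  exact_mod_cast key

theorem Polynomial.IsPrimitive.irreducible_of_forall_natDegree_pos {R : Type*} [CommRing R]
    [IsDomain R] {f : R[X]} (hf : f.IsPrimitive) (hdeg : 0 < f.natDegree)
    (h : ∀ a b, f = a * b → 0 < a.natDegree → 0 < b.natDegree → False) : Irreducible f := by
  have hunit : ∀ a b, f = a * b → a.natDegree = 0 → IsUnit a := fun a b hab ha => by
    rw [eq_C_of_natDegree_eq_zero ha] at hab ⊢
    exact isUnit_C.mpr (hf _ ⟨b, hab⟩)
  refine ⟨fun hu => hdeg.ne' (natDegree_eq_zero_of_isUnit hu), fun a b hab => ?_⟩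
  by_contra! hab'
  refine h a b hab (Nat.pos_of_ne_zero fun ha => hab'.1 (hunit a b hab ha))
    (Nat.pos_of_ne_zero fun hb => hab'.2 (hunit b a (hab.trans (mul_comm a b)) hb))

theorem Int.abs_le_of_dvd_pow_mul {p y d : ℤ} (hp : Prime p) (hd : d ≠ 0) {k : ℕ}
    (hy : y ∣ p ^ k * d) (hpy : ¬ p ∣ y) : |y| ≤ |d| :=
  Int.le_of_dvd (abs_pos.mpr hd) ((abs_dvd_abs _ _).mpr
    ((hp.coprime_iff_not_dvd.mpr hpy).symm.pow_right.dvd_of_dvd_mul_left hy))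

theorem not_pow_succ_dvd_of_dvd_pow_mul {M : Type*} [CommMonoidWithZero M] [IsCancelMulZero M]
    {p x d : M} (hp : p ≠ 0) {k : ℕ} (hx : x ∣ p ^ k * d) (hpd : ¬ p ∣ d) :
    ¬ p ^ (k + 1) ∣ x := fun h =>
  hpd ((mul_dvd_mul_iff_left (pow_ne_zero k hp)).mp (pow_succ p k ▸ h.trans hx))

open Polynomial in
theorem stmt_8_general (m : ℕ) (f : ℤ[X]) (hdeg : f.natDegree = m) (hprim : f.IsPrimitive)
    (α : ℝ) (hα : 0 < α)
    (hineq : (|f.coeff m| : ℝ) * α ^ m >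
      ∑ i ∈ Finset.range m, (|f.coeff i| : ℝ) * α ^ i)
    (n d k ℓ : ℕ) (hℓ : 0 < ℓ)
    (hℓm : ℓ ≤ m) (p : ℕ) (hp : p.Prime) (hpd : ¬ p ∣ d)
    (hnα : (n : ℝ) ≥ α + d)
    (hval : f.eval (n : ℤ) = (p : ℤ) ^ k * d ∨ f.eval (n : ℤ) = -((p : ℤ) ^ k * d))
    (hcop : Nat.Coprime k ℓ)
    (hdiv : ∀ i < ℓ, (p : ℤ) ^ k ∣ (Polynomial.hasseDeriv i f).eval (n : ℤ))
    (hnd : 1 < k → ¬ (p : ℤ) ∣ (Polynomial.hasseDeriv ℓ f).eval (n : ℤ)) :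
    Irreducible f := by
  subst hdeg
  have := Fact.mk hp
  have hd : 0 < d := Nat.pos_of_ne_zero fun h => hpd (h ▸ dvd_zero p)
  have hfn : f.eval (n : ℤ) ∣ (p : ℤ) ^ k * d := by rcases hval with h | h <;> simp [h]
  have hpow : ¬ (p : ℤ) ^ (k + 1) ∣ f.eval (n : ℤ) :=
    not_pow_succ_dvd_of_dvd_pow_mul (by exact_mod_cast hp.ne_zero) hfn (by exact_mod_cast hpd)
  have hfactor : ∀ g : ℤ[X], g ∣ f → 0 < g.natDegree → (p : ℤ) ∣ g.eval (n : ℤ) := by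
    intro g hg hg0
    by_contra hpg
    have hlarge := lt_abs_eval_of_dvd hg hg0 hα hineq hd (z := n) (by simpa using hnα)
    have hsmall := Int.abs_le_of_dvd_pow_mul (Nat.prime_iff_prime_int.mp hp)
      (by exact_mod_cast hd.ne') ((eval_dvd hg).trans hfn) hpg
    exact hlarge.not_ge (by simpa using hsmall)
  refine hprim.irreducible_of_forall_natDegree_pos (by omega) fun a b hab ha hb => ?_
  have hpa := hfactor a ⟨b, hab⟩ ha
  have hpb := hfactor b ⟨a, hab.trans (mul_comm a b)⟩ hb
  rcases lt_or_ge 1 k with hk | hk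
  · refine hnd hk ?_
    have htaylor : taylor (n : ℤ) a * taylor (n : ℤ) b = taylor (n : ℤ) f := by rw [hab, taylor_mul]
    have := prime_dvd_coeff_mul_of_coprime hℓ hcop (G := taylor (n : ℤ) a) (H := taylor (n : ℤ) b)
      (by rwa [taylor_coeff_zero]) (by rwa [taylor_coeff_zero])
      (by rwa [htaylor, taylor_coeff_zero]) (by simpa [htaylor, taylor_coeff] using hdiv)
    rwa [htaylor, taylor_coeff] at this
  · refine hpow ((pow_dvd_pow _ (by omega : k + 1 ≤ 2)).trans ?_)
    rw [hab, eval_mul, pow_two]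
    exact mul_dvd_mul hpa hpb

open Polynomial in
theorem stmt_8 (m : ℕ) (f : ℤ[X]) (hdeg : f.natDegree = m) (hprim : f.IsPrimitive)
    (α : ℝ) (hα : 0 < α)
    (hineq : (|f.coeff m| : ℝ) * α ^ m >
      ∑ i ∈ Finset.range m, (|f.coeff i| : ℝ) * α ^ i)
    (n d k ℓ : ℕ) (hn : 0 < n) (hd : 0 < d) (hk : 0 < k) (hℓ : 0 < ℓ)
    (hℓm : ℓ ≤ m) (p : ℕ) (hp : p.Prime) (hpd : ¬ p ∣ d)
    (hnα : (n : ℝ) ≥ α + d)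
    (hval : f.eval (n : ℤ) = (p : ℤ) ^ k * d ∨ f.eval (n : ℤ) = -((p : ℤ) ^ k * d))
    (hcop : Nat.Coprime k ℓ)
    (hdiv : ∀ i < ℓ, (p : ℤ) ^ k ∣ (Polynomial.hasseDeriv i f).eval (n : ℤ))
    (hnd : 1 < k → ¬ (p : ℤ) ∣ (Polynomial.hasseDeriv ℓ f).eval (n : ℤ)) :
    Irreducible f :=
  stmt_8_general m f hdeg hprim α hα hineq n d k ℓ hℓ hℓm p hp hpd hnα hval hcop hdiv hnd
end

section
/- Let f = a_0 + a_1 z + ... + a_m z^m ∈ ℤ[z] be primitive. Suppose there exist reals 0 < α < β and an index j ∈ {0,...,m} with |a_j| α^j > Σ_{i≠j} |a_i| β^i. If there exist natural numbers n, d, k, ℓ ≤ m and a prime p ∤ d with β - d ≥ n ≥ α + d, f(n) = ± p^k d, gcd(k, ℓ) = 1, p^k | f^{(i)}(n)/i! for i = 0,...,ℓ-1, and (when k > 1) p ∤ f^{(ℓ)}(n)/ℓ!, then f is irreducible in ℤ[z]. -/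
/-!
The dominant coefficient keeps every complex root of `f` off the annulus `α ≤ |z| ≤ β`, so
each root is at distance more than `d` from `n`; hence any nonconstant factor `q` of `f` (with
integer leading coefficient) has `|q(n)| > d`.

The coefficients of `f(X + n)` are the `f⁽ⁱ⁾(n)/i!`. Under the hypotheses, the `p`-adic
Newton polygon of `f(X + n)` starts with the segment from `(0, k)` to `(ℓ, 0)`, which has no
interior lattice points since `gcd(k, ℓ) = 1` (Dumas). A factorisation `f = g h` splits this
segment between `g(X + n)` and `h(X + n)`, so one of them gets all of it: `p ∤ g(n)` or
`p ∤ h(n)`, say `p ∤ g(n)`. Then `g(n)` divides `±p^k d` and is prime to `p`, so `|g(n)| ≤ d`,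
a contradiction.
-/

open Polynomial Finset

theorem lt_norm_sub_of_norm_lt_or_lt_norm {E : Type*} [SeminormedAddCommGroup E] {x z : E}
    {α β r : ℝ} (hz : ‖z‖ < α ∨ β < ‖z‖) (hα : α + r ≤ ‖x‖) (hβ : ‖x‖ ≤ β - r) :
    r < ‖x - z‖ := by
  have h₁ := norm_sub_norm_le x z
  have h₂ := norm_sub_norm_le z x
  rw [norm_sub_rev z] at h₂
  rcases hz with hz | hz <;> linarith

namespace Polynomial

theorem norm_lt_or_lt_norm_of_isRoot {K : Type*} [NormedField K] {f : K[X]}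
    {α β : ℝ} (hα : 0 ≤ α) {j : ℕ} (hj : j ≤ f.natDegree)
    (hdom : ∑ i ∈ (range (f.natDegree + 1)).erase j, ‖f.coeff i‖ * β ^ i < ‖f.coeff j‖ * α ^ j)
    {z : K} (hz : f.IsRoot z) : ‖z‖ < α ∨ β < ‖z‖ := by
  by_contra! hαzβ
  have hsplit :
      f.coeff j * z ^ j = -∑ i ∈ (range (f.natDegree + 1)).erase j, f.coeff i * z ^ i := by
    rw [eq_neg_iff_add_eq_zero,
      add_sum_erase _ (fun i => f.coeff i * z ^ i) (mem_range.2 (Nat.lt_succ_of_le hj)),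
      ← eval_eq_sum_range]
    exact hz
  have : ‖f.coeff j‖ * α ^ j ≤ ∑ i ∈ (range (f.natDegree + 1)).erase j, ‖f.coeff i‖ * β ^ i :=
    calc ‖f.coeff j‖ * α ^ j ≤ ‖f.coeff j * z ^ j‖ := by
          rw [norm_mul, norm_pow]; gcongr; exact hαzβ.1
      _ ≤ ∑ i ∈ (range (f.natDegree + 1)).erase j, ‖f.coeff i * z ^ i‖ := by
          rw [hsplit, norm_neg]; exact norm_sum_le _ _
      _ ≤ _ := sum_le_sum fun i _ => by rw [norm_mul, norm_pow]; gcongr; exact hαzβ.2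
  linarith

theorem lt_norm_eval_of_lt_norm_sub_roots {K : Type*} [NormedField K] {q : K[X]}
    (hq : q.Splits) (hdeg : 0 < q.natDegree) (hlc : 1 ≤ ‖q.leadingCoeff‖) {r : ℝ} (hr : 1 ≤ r)
    {x : K} (hfar : ∀ z ∈ q.roots, r < ‖x - z‖) : r < ‖q.eval x‖ := by
  obtain ⟨z₀, hz₀⟩ : ∃ z₀, z₀ ∈ q.roots := Multiset.exists_mem_of_ne_zero <| by
    rw [← Multiset.card_pos, splits_iff_card_roots.1 hq]; exact hdeg
  obtain ⟨rest, hrest⟩ := Multiset.exists_cons_of_mem hz₀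
  have hrest_ge : 1 ≤ ‖(rest.map (x - ·)).prod‖ :=
    Multiset.prod_induction (fun a => 1 ≤ ‖a‖) _
      (fun a b ha hb => by rw [norm_mul]; exact one_le_mul_of_one_le_of_one_le ha hb)
      (by simp)
      (fun _ hy => by
        obtain ⟨z, hz, rfl⟩ := Multiset.mem_map.1 hy
        exact hr.trans (hfar z (hrest ▸ Multiset.mem_cons_of_mem hz)).le)
  rw [hq.eval_eq_prod_roots, hrest, Multiset.map_cons, Multiset.prod_cons, norm_mul, norm_mul]
  calc r < ‖x - z₀‖ := hfar z₀ hz₀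
    _ ≤ ‖x - z₀‖ * ‖(rest.map (x - ·)).prod‖ := le_mul_of_one_le_right (norm_nonneg _) hrest_ge
    _ ≤ _ := le_mul_of_one_le_left (by positivity) hlc

theorem lt_abs_eval_of_lt_norm_sub_roots {q : ℤ[X]} (hdeg : 0 < q.natDegree) {r : ℝ}
    (hr : 1 ≤ r) {x : ℤ}
    (hfar : ∀ z : ℂ, (q.map (Int.castRingHom ℂ)).IsRoot z → r < ‖(x : ℂ) - z‖) :
    r < |((q.eval x : ℤ) : ℝ)| := by
  have hinj := RingHom.injective_int (Int.castRingHom ℂ)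
  have hlc : 1 ≤ ‖(q.map (Int.castRingHom ℂ)).leadingCoeff‖ := by
    rw [leadingCoeff_map_of_injective hinj, eq_intCast, Complex.norm_intCast]
    exact_mod_cast Int.one_le_abs (leadingCoeff_ne_zero.2 (ne_zero_of_natDegree_gt hdeg))
  have h := lt_norm_eval_of_lt_norm_sub_roots (IsAlgClosed.splits _)
    (by rwa [natDegree_map_eq_of_injective hinj]) hlc hr
    (fun z hz => hfar z (isRoot_of_mem_roots hz))
  rwa [eval_intCast_map, eq_intCast, Complex.norm_intCast] at h

theorem IsPrimitive.natDegree_pos_of_dvd {R : Type*} [CommSemiring R] {f q : R[X]}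
    (hf : f.IsPrimitive) (hq : q ∣ f) (hu : ¬ IsUnit q) : 0 < q.natDegree := by
  by_contra! h
  rw [eq_C_of_natDegree_eq_zero (Nat.le_zero.1 h)] at hq hu
  exact hu (isUnit_C.2 (hf _ hq))

end Polynomial

theorem Finset.exists_first_min_image {α β : Type*} [LinearOrder α] [LinearOrder β]
    (s : Finset α) (f : α → β) (hs : s.Nonempty) :
    ∃ x₀ ∈ s, ∀ x ∈ s, f x₀ ≤ f x ∧ (x < x₀ → f x₀ < f x) := by
  obtain ⟨x₀, hx₀, hmin⟩ := s.exists_min_image (fun x => toLex (f x, x)) hs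
  refine ⟨x₀, hx₀, fun x hx => ?_⟩
  rcases Prod.Lex.toLex_le_toLex.1 (hmin x hx) with h | ⟨h, h'⟩
  · exact ⟨h.le, fun _ => h⟩
  · exact ⟨h.le, fun hlt => absurd h' (not_le.2 hlt)⟩

theorem Int.natAbs_le_of_dvd_of_natAbs_eq_prime_pow_mul {p k d : ℕ} (hp : p.Prime) (hd : 0 < d)
    {u N : ℤ} (hN : N.natAbs = p ^ k * d) (hu : u ∣ N) (hpu : ¬ (p : ℤ) ∣ u) : u.natAbs ≤ d := by
  have hcop : u.natAbs.Coprime (p ^ k) :=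
    (Nat.Coprime.symm <| (hp.coprime_iff_not_dvd).2 (Int.natCast_dvd.not.1 hpu)).pow_right k
  exact Nat.le_of_dvd hd (hcop.dvd_of_dvd_mul_left (hN ▸ Int.natAbs_dvd_natAbs.2 hu))

theorem pow_dvd_iff_le_padicValInt {p : ℕ} [Fact p.Prime] {x : ℤ} (hx : x ≠ 0) (n : ℕ) :
    (p : ℤ) ^ n ∣ x ↔ n ≤ padicValInt p x := by
  simp [padicValInt_dvd_iff, hx]

namespace Polynomial

/-- `ℓ v_p(cᵢ) + k i` measures the point `(i, v_p(cᵢ))` against lines of slope `-k/ℓ`: the Newton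
polygon of `P` lies on or above the line through `(0, k)` to `(ℓ, 0)` iff all these weights on the
support of `P` are at least `ℓ k`. -/
def newtonWeight (p k ℓ : ℕ) (P : ℤ[X]) (i : ℕ) : ℕ :=
  ℓ * padicValInt p (P.coeff i) + k * i

section Dumas

variable {p : ℕ} [Fact p.Prime]

theorem exists_newtonWeight_mul_le (k ℓ : ℕ)
    {G H : ℤ[X]} (hG : G ≠ 0) (hH : H ≠ 0) :
    ∃ t, (G * H).coeff t ≠ 0 ∧ ∀ i ∈ G.support, ∀ j ∈ H.support,
      newtonWeight p k ℓ (G * H) t ≤ newtonWeight p k ℓ G i + newtonWeight p k ℓ H j := by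
  obtain ⟨x₀, hx₀, hGmin⟩ :=
    G.support.exists_first_min_image (newtonWeight p k ℓ G) (support_nonempty.2 hG)
  obtain ⟨y₀, hy₀, hHmin⟩ :=
    H.support.exists_first_min_image (newtonWeight p k ℓ H) (support_nonempty.2 hH)
  rw [mem_support_iff] at hx₀ hy₀
  set s := padicValInt p (G.coeff x₀) + padicValInt p (H.coeff y₀) with hs
  -- Since `x₀` and `y₀` are the least indices of minimal weight, every other term of the
  -- coefficient of `X ^ (x₀ + y₀)` in `G * H` has valuation above `s`.
  have hoff : ∀ q ∈ antidiagonal (x₀ + y₀), q ≠ (x₀, y₀) →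
      (p : ℤ) ^ (s + 1) ∣ G.coeff q.1 * H.coeff q.2 := by
    rintro ⟨x, y⟩ hxy hne
    rw [HasAntidiagonal.mem_antidiagonal] at hxy
    by_cases hGx : G.coeff x = 0
    · simp [hGx]
    by_cases hHy : H.coeff y = 0
    · simp [hHy]
    rw [pow_dvd_iff_le_padicValInt (mul_ne_zero hGx hHy), padicValInt.mul hGx hHy]
    have hlt : newtonWeight p k ℓ G x₀ + newtonWeight p k ℓ H y₀ <
        newtonWeight p k ℓ G x + newtonWeight p k ℓ H y := by
      have hG' := hGmin x (mem_support_iff.2 hGx)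
      have hH' := hHmin y (mem_support_iff.2 hHy)
      rcases lt_or_ge x x₀ with hx | hx
      · exact add_lt_add_of_lt_of_le (hG'.2 hx) hH'.1
      · exact add_lt_add_of_le_of_lt hG'.1 (hH'.2 (by grind))
    simp only [newtonWeight] at hlt
    have : ℓ * s < ℓ * (padicValInt p (G.coeff x) + padicValInt p (H.coeff y)) := by
      have : k * x + k * y = k * x₀ + k * y₀ := by rw [← mul_add, ← mul_add, ← hxy]
      rw [hs, mul_add, mul_add]
      linarith
    exact Nat.lt_of_mul_lt_mul_left this
  have hdiag : ¬ (p : ℤ) ^ (s + 1) ∣ G.coeff x₀ * H.coeff y₀ := by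
    rw [pow_dvd_iff_le_padicValInt (mul_ne_zero hx₀ hy₀), padicValInt.mul hx₀ hy₀]
    omega
  have hcoeff : ¬ (p : ℤ) ^ (s + 1) ∣ (G * H).coeff (x₀ + y₀) := by
    rw [coeff_mul, ← add_sum_erase _ _ (a := (x₀, y₀)) (HasAntidiagonal.mem_antidiagonal.2 rfl),
      dvd_add_left (dvd_sum fun q hq => hoff q (mem_of_mem_erase hq) (ne_of_mem_erase hq))]
    exact hdiag
  have hne : (G * H).coeff (x₀ + y₀) ≠ 0 := fun h => hcoeff (h ▸ dvd_zero _)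
  have hval : padicValInt p ((G * H).coeff (x₀ + y₀)) ≤ s := by
    by_contra! h
    exact hcoeff ((pow_dvd_iff_le_padicValInt hne _).2 h)
  refine ⟨x₀ + y₀, hne, fun i hi j hj => ?_⟩
  have hGi := (hGmin i hi).1
  have hHj := (hHmin j hj).1
  simp only [newtonWeight] at hGi hHj ⊢
  nlinarith

theorem exists_add_eq_and_not_dvd_coeff {G H : ℤ[X]} {ℓ : ℕ}
    (hlow : ∀ i < ℓ, (p : ℤ) ∣ (G * H).coeff i) (htop : ¬ (p : ℤ) ∣ (G * H).coeff ℓ) :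
    ∃ a b, a + b = ℓ ∧ ¬ (p : ℤ) ∣ G.coeff a ∧ ¬ (p : ℤ) ∣ H.coeff b := by
  set φ := Int.castRingHom (ZMod p)
  have hcoeff (P : ℤ[X]) (i : ℕ) : (P.map φ).coeff i = 0 ↔ (p : ℤ) ∣ P.coeff i := by
    rw [coeff_map]; exact ZMod.intCast_zmod_eq_zero_iff_dvd _ _
  have htop' : (G.map φ * H.map φ).coeff ℓ ≠ 0 := by rwa [← Polynomial.map_mul, Ne, hcoeff]
  have hG : G.map φ ≠ 0 := by rintro h; simp [h] at htop'
  have hH : H.map φ ≠ 0 := by rintro h; simp [h] at htop'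
  have hℓ : (G.map φ * H.map φ).natTrailingDegree = ℓ :=
    le_antisymm (natTrailingDegree_le_of_ne_zero htop')
      (le_natTrailingDegree (mul_ne_zero hG hH) fun i hi => by
        rw [← Polynomial.map_mul, hcoeff]; exact hlow i hi)
  refine ⟨_, _, (natTrailingDegree_mul hG hH).symm.trans hℓ, ?_, ?_⟩
  · rw [← hcoeff]; exact trailingCoeff_nonzero_iff_nonzero.2 hG
  · rw [← hcoeff]; exact trailingCoeff_nonzero_iff_nonzero.2 hH

theorem not_dvd_coeff_zero_or_of_dumas {k ℓ : ℕ} (hℓ : 0 < ℓ)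
    (hcop : k.Coprime ℓ) {G H : ℤ[X]} (hlow : ∀ i < ℓ, (p : ℤ) ^ k ∣ (G * H).coeff i)
    (h0 : ¬ (p : ℤ) ^ (k + 1) ∣ (G * H).coeff 0) (htop : 1 < k → ¬ (p : ℤ) ∣ (G * H).coeff ℓ) :
    ¬ (p : ℤ) ∣ G.coeff 0 ∨ ¬ (p : ℤ) ∣ H.coeff 0 := by
  rw [mul_coeff_zero] at h0
  rcases le_or_gt k 1 with hk | hk
  · by_contra! h
    exact h0 ((pow_dvd_pow _ (by omega)).trans (sq (p : ℤ) ▸ mul_dvd_mul h.1 h.2))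
  have hF0 : G.coeff 0 * H.coeff 0 ≠ 0 := fun h => h0 (h ▸ dvd_zero _)
  obtain ⟨hG0, hH0⟩ := mul_ne_zero_iff.1 hF0
  have hv0 : padicValInt p (G.coeff 0) + padicValInt p (H.coeff 0) = k := by
    have := (pow_dvd_iff_le_padicValInt hF0 _).1 (mul_coeff_zero G H ▸ hlow 0 hℓ)
    rw [pow_dvd_iff_le_padicValInt hF0] at h0
    rw [← padicValInt.mul hG0 hH0]
    omega
  obtain ⟨a, b, hab, ha, hb⟩ := exists_add_eq_and_not_dvd_coeff
    (fun i hi => (dvd_pow_self _ (by omega)).trans (hlow i hi)) (htop hk)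
  have hG : G ≠ 0 := by rintro rfl; simp at hG0
  have hH : H ≠ 0 := by rintro rfl; simp at hH0
  obtain ⟨t, ht, hmin⟩ := exists_newtonWeight_mul_le (p := p) k ℓ hG hH
  have hwt : ℓ * k ≤ ℓ * padicValInt p ((G * H).coeff t) + k * t := by
    rcases lt_or_ge t ℓ with htℓ | htℓ
    · have := (pow_dvd_iff_le_padicValInt ht _).1 (hlow t htℓ)
      nlinarith
    · nlinarith
  -- The weights of `(0, b)` and `(a, 0)` bound the minimal weight `≥ ℓ k` of `G * H`; adding the
  -- two bounds shows both are equalities.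
  have hw0b := hmin 0 (mem_support_iff.2 hG0) b (mem_support_iff.2 fun h => hb (h ▸ dvd_zero _))
  have hwa0 := hmin a (mem_support_iff.2 fun h => ha (h ▸ dvd_zero _)) 0 (mem_support_iff.2 hH0)
  simp only [newtonWeight, padicValInt.eq_zero_of_not_dvd ha, padicValInt.eq_zero_of_not_dvd hb,
    mul_zero, zero_add, add_zero] at hw0b hwa0
  have hsumv : ℓ * padicValInt p (G.coeff 0) + ℓ * padicValInt p (H.coeff 0) = ℓ * k := by
    rw [← mul_add, hv0]
  have hsumab : k * a + k * b = ℓ * k := by rw [← mul_add, hab, mul_comm]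
  have hvH : ℓ * padicValInt p (H.coeff 0) = k * b := by linarith
  have hvG : ℓ * padicValInt p (G.coeff 0) = k * a := by linarith
  have hℓb : ℓ ∣ b := hcop.symm.dvd_of_dvd_mul_left ⟨_, hvH.symm⟩
  have hnot_dvd {x : ℤ} (hx : x ≠ 0) (hv : padicValInt p x = 0) : ¬ (p : ℤ) ∣ x := by
    simpa [hv] using (pow_dvd_iff_le_padicValInt (p := p) hx 1).not
  rcases Nat.eq_zero_or_pos b with rfl | hb_pos
  · exact .inr (hnot_dvd hH0 (by simpa [hℓ.ne'] using hvH))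
  · obtain rfl : a = 0 := by have := Nat.le_of_dvd hb_pos hℓb; omega
    exact .inl (hnot_dvd hG0 (by simpa [hℓ.ne'] using hvG))

end Dumas

end Polynomial

open Polynomial in
theorem stmt_9_general (m : ℕ) (f : ℤ[X]) (hdeg : f.natDegree = m) (hprim : f.IsPrimitive)
    (α β : ℝ) (hα : 0 < α) (j : ℕ) (hj : j ≤ m)
    (hineq : (|f.coeff j| : ℝ) * α ^ j >
      ∑ i ∈ (Finset.range (m + 1)).erase j, (|f.coeff i| : ℝ) * β ^ i)
    (n d k ℓ : ℕ) (hd : 0 < d) (hℓ : 0 < ℓ)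
    (hℓm : ℓ ≤ m) (p : ℕ) (hp : p.Prime) (hpd : ¬ p ∣ d)
    (hnα : (n : ℝ) ≥ α + d) (hnβ : (n : ℝ) ≤ β - d)
    (hval : f.eval (n : ℤ) = (p : ℤ) ^ k * d ∨ f.eval (n : ℤ) = -((p : ℤ) ^ k * d))
    (hcop : Nat.Coprime k ℓ)
    (hdiv : ∀ i < ℓ, (p : ℤ) ^ k ∣ (Polynomial.hasseDeriv i f).eval (n : ℤ))
    (hnd : 1 < k → ¬ (p : ℤ) ∣ (Polynomial.hasseDeriv ℓ f).eval (n : ℤ)) :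
    Irreducible f := by
  have := Fact.mk hp
  subst hdeg
  have hfar (z : ℂ) (hz : (f.map (Int.castRingHom ℂ)).IsRoot z) :
      (d : ℝ) < ‖((n : ℤ) : ℂ) - z‖ := by
    have hdeg_map := natDegree_map_eq_of_injective (RingHom.injective_int (Int.castRingHom ℂ)) f
    have hroot := norm_lt_or_lt_norm_of_isRoot hα.le (hdeg_map ▸ hj)
      (by simpa [hdeg_map] using hineq) hz
    exact lt_norm_sub_of_norm_lt_or_lt_norm hroot (by simpa using hnα.le) (by simpa using hnβ)
  have hN : (f.eval (n : ℤ)).natAbs = p ^ k * d := by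
    rcases hval with h | h <;> simp [h, Int.natAbs_mul, Int.natAbs_pow]
  have hunit (q : ℤ[X]) (hq : q ∣ f) (hpq : ¬ (p : ℤ) ∣ q.eval (n : ℤ)) : IsUnit q := by
    by_contra hu
    have hlarge : (d : ℝ) < |((q.eval (n : ℤ) : ℤ) : ℝ)| :=
      lt_abs_eval_of_lt_norm_sub_roots (hprim.natDegree_pos_of_dvd hq hu) (by exact_mod_cast hd)
        fun z hz => hfar z (hz.dvd (Polynomial.map_dvd _ hq))
    have hsmall := Int.natAbs_le_of_dvd_of_natAbs_eq_prime_pow_mul hp hd hN (eval_dvd hq) hpq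
    rw [← Int.cast_abs, ← Int.natCast_natAbs] at hlarge
    exact_mod_cast hlarge.not_ge (by exact_mod_cast hsmall)
  refine irreducible_iff.2 ⟨fun hu => by have := natDegree_eq_zero_of_isUnit hu; omega,
    fun g h hgh => ?_⟩
  have htaylor : taylor (n : ℤ) g * taylor (n : ℤ) h = taylor (n : ℤ) f := by
    rw [← taylor_mul, hgh]
  have h0 : ¬ (p : ℤ) ^ (k + 1) ∣ f.eval (n : ℤ) := by
    rw [← Nat.cast_pow, Int.natCast_dvd, hN, pow_succ, Nat.mul_dvd_mul_iff_left (pow_pos hp.pos k)]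
    exact hpd
  have hkey := not_dvd_coeff_zero_or_of_dumas hℓ hcop
    (G := taylor (n : ℤ) g) (H := taylor (n : ℤ) h)
    (by simpa only [htaylor, taylor_coeff] using hdiv)
    (by rwa [htaylor, taylor_coeff_zero]) (by simpa only [htaylor, taylor_coeff] using hnd)
  rw [taylor_coeff_zero, taylor_coeff_zero] at hkey
  exact hkey.imp (hunit g (hgh ▸ dvd_mul_right g h)) (hunit h (hgh ▸ dvd_mul_left h g))

open Polynomial in
theorem stmt_9 (m : ℕ) (f : ℤ[X]) (hdeg : f.natDegree = m) (hprim : f.IsPrimitive)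
    (α β : ℝ) (hα : 0 < α) (hαβ : α < β) (j : ℕ) (hj : j ≤ m)
    (hineq : (|f.coeff j| : ℝ) * α ^ j >
      ∑ i ∈ (Finset.range (m + 1)).erase j, (|f.coeff i| : ℝ) * β ^ i)
    (n d k ℓ : ℕ) (hn : 0 < n) (hd : 0 < d) (hk : 0 < k) (hℓ : 0 < ℓ)
    (hℓm : ℓ ≤ m) (p : ℕ) (hp : p.Prime) (hpd : ¬ p ∣ d)
    (hnα : (n : ℝ) ≥ α + d) (hnβ : (n : ℝ) ≤ β - d)
    (hval : f.eval (n : ℤ) = (p : ℤ) ^ k * d ∨ f.eval (n : ℤ) = -((p : ℤ) ^ k * d))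
    (hcop : Nat.Coprime k ℓ)
    (hdiv : ∀ i < ℓ, (p : ℤ) ^ k ∣ (Polynomial.hasseDeriv i f).eval (n : ℤ))
    (hnd : 1 < k → ¬ (p : ℤ) ∣ (Polynomial.hasseDeriv ℓ f).eval (n : ℤ)) :
    Irreducible f :=
  stmt_9_general m f hdeg hprim α β hα j hj hineq n d k ℓ hd hℓ hℓm p hp hpd hnα hnβ hval hcop hdiv
    hnd
end

section
/- Let f = a_0 + a_1 z + ... + a_m z^m ∈ ℤ[z] be primitive with |a_m| α^m > |a_0| + |a_1|α + ... + |a_{m-1}|α^{m-1} for some α > 0. If there exist natural numbers n and d with n ≥ α + d such that |f(n)|/d is prime, then f is irreducible in ℤ[z]. -/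
/-!
Every complex root `z` of `f` satisfies `|z| < α`: otherwise the leading term `a_m z^m` would
dominate the remaining ones. If `f = g h` with `g, h` non-units, both have positive degree
(`f` is primitive), so `|g(n)| = |lc g| ∏ |n - z|`, the product running over the roots of `g`,
is a nonempty product of factors `> n - α ≥ d ≥ 1`, hence `|g(n)| > d`; likewise `|h(n)| > d`.
But `|g(n)| |h(n)| = d p` with `p` prime: `p` divides one factor, so the other divides `d`.
-/

open Polynomial

namespace Polynomial

theorem norm_lt_of_isRoot_s11 {K : Type*} [NormedField K] {p : K[X]} {α : ℝ} (hα : 0 < α)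
    (hdom : ∑ i ∈ Finset.range p.natDegree, ‖p.coeff i‖ * α ^ i <
      ‖p.leadingCoeff‖ * α ^ p.natDegree)
    {z : K} (hz : p.IsRoot z) : ‖z‖ < α := by
  by_contra! hαz
  set m := p.natDegree
  set t := ‖z‖ / α
  have ht : 1 ≤ t := (one_le_div hα).mpr hαz
  have hzt : ‖z‖ = α * t := (mul_div_cancel₀ _ hα.ne').symm
  have hlead : p.leadingCoeff * z ^ m = -∑ i ∈ Finset.range m, p.coeff i * z ^ i := by
    have := hz.eq_zero
    rw [eval_eq_sum_range, Finset.sum_range_succ, coeff_natDegree] at this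
    linear_combination this
  refine lt_irrefl (‖p.leadingCoeff‖ * α ^ m * t ^ m) ?_
  calc ‖p.leadingCoeff‖ * α ^ m * t ^ m = ‖p.leadingCoeff * z ^ m‖ := by
        rw [norm_mul, norm_pow, hzt, mul_pow, mul_assoc]
    _ ≤ ∑ i ∈ Finset.range m, ‖p.coeff i‖ * ‖z‖ ^ i := by
        rw [hlead, norm_neg]
        refine (norm_sum_le _ _).trans_eq ?_
        simp only [norm_mul, norm_pow]
    _ ≤ ∑ i ∈ Finset.range m, ‖p.coeff i‖ * α ^ i * t ^ m := by
        refine Finset.sum_le_sum fun i hi ↦ ?_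
        rw [hzt, mul_pow, mul_assoc]
        gcongr
        exact (Finset.mem_range.mp hi).le
    _ = (∑ i ∈ Finset.range m, ‖p.coeff i‖ * α ^ i) * t ^ m := (Finset.sum_mul ..).symm
    _ < ‖p.leadingCoeff‖ * α ^ m * t ^ m := by gcongr

theorem IsPrimitive.isUnit_of_natDegree_eq_zero {R : Type*} [CommSemiring R] {p : R[X]}
    (hp : p.IsPrimitive) (h : p.natDegree = 0) : IsUnit p := by
  rw [eq_C_of_natDegree_eq_zero h] at hp ⊢
  exact isUnit_C.mpr (hp _ dvd_rfl)

theorem lt_abs_eval_of_lt_norm_sub_aroots {g : ℤ[X]} (hg : 0 < g.natDegree) {c : ℝ} (hc : 1 ≤ c)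
    {x : ℤ} (h : ∀ z ∈ g.aroots ℂ, c < ‖(x : ℂ) - z‖) : c < |((g.eval x : ℤ) : ℝ)| := by
  obtain ⟨z, hz⟩ : ∃ z, z ∈ g.aroots ℂ := Multiset.card_pos_iff_exists_mem.mp
    (by rwa [IsAlgClosed.card_aroots_eq_natDegree])
  obtain ⟨s, hs⟩ := Multiset.exists_cons_of_mem hz
  have hlead : (1 : ℝ) ≤ ‖(g.leadingCoeff : ℂ)‖ := by
    rw [Complex.norm_intCast]
    exact_mod_cast Int.one_le_abs (leadingCoeff_ne_zero.mpr (ne_zero_of_natDegree_gt hg))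
  have hrest : 1 ≤ (s.map fun w ↦ ‖(x : ℂ) - w‖).prod :=
    Multiset.one_le_prod_map fun w hw ↦ hc.trans (h w (hs ▸ Multiset.mem_cons_of_mem hw)).le
  have heval : |((g.eval x : ℤ) : ℝ)| =
      ‖(g.leadingCoeff : ℂ)‖ * (‖(x : ℂ) - z‖ * (s.map fun w ↦ ‖(x : ℂ) - w‖).prod) := by
    have : ((g.eval x : ℤ) : ℂ) = (g.map (algebraMap ℤ ℂ)).eval (x : ℂ) := by simp
    rw [← Complex.norm_intCast, this, (IsAlgClosed.splits _).eval_eq_prod_roots,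
      leadingCoeff_map_of_injective (algebraMap ℤ ℂ).injective_int, ← aroots_def, hs,
      Multiset.map_cons, Multiset.prod_cons, norm_mul, norm_mul, eq_intCast]
    congr 2
    simpa [Multiset.map_map] using map_multiset_prod (normHom : ℂ →*₀ ℝ) (s.map ((x : ℂ) - ·))
  rw [heval]
  calc c < ‖(x : ℂ) - z‖ := h z hz
    _ ≤ ‖(g.leadingCoeff : ℂ)‖ * (‖(x : ℂ) - z‖ * (s.map fun w ↦ ‖(x : ℂ) - w‖).prod) := by
      refine le_mul_of_one_le_left (by positivity) hlead |>.trans' ?_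
      exact le_mul_of_one_le_right (norm_nonneg _) hrest

end Polynomial

theorem Nat.le_or_le_of_prime_mul_div {a b d : ℕ} (hdvd : d ∣ a * b) (hp : (a * b / d).Prime) :
    a ≤ d ∨ b ≤ d := by
  set p := a * b / d
  have hd : 0 < d := Nat.pos_of_ne_zero (fun h ↦ by simp [p, h, Nat.not_prime_zero] at hp)
  have hab : a * b = p * d := (Nat.div_mul_cancel hdvd).symm
  have key : ∀ {x y : ℕ}, x * y = p * d → p ∣ x → y ≤ d := fun hxy hpx ↦
    Nat.le_of_dvd hd <| Nat.dvd_of_mul_dvd_mul_left hp.pos (hxy ▸ mul_dvd_mul_right hpx _)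
  rcases hp.dvd_mul.mp (Dvd.intro d hab.symm) with hpa | hpb
  · exact .inr (key hab hpa)
  · exact .inl (key (by rw [mul_comm, hab]) hpb)

open Polynomial in
theorem stmt_11_general (m : ℕ) (f : ℤ[X]) (hdeg : f.natDegree = m) (hprim : f.IsPrimitive)
    (α : ℝ) (hα : 0 < α)
    (hineq : (|f.coeff m| : ℝ) * α ^ m >
      ∑ i ∈ Finset.range m, (|f.coeff i| : ℝ) * α ^ i)
    (n d : ℕ) (hnα : (n : ℝ) ≥ α + d)
    (hdvd : (d : ℤ) ∣ f.eval (n : ℤ))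
    (hprime : Nat.Prime ((f.eval (n : ℤ)).natAbs / d)) :
    Irreducible f := by
  have hd : (1 : ℝ) ≤ d := by
    exact_mod_cast Nat.pos_of_ne_zero (by rintro rfl; simp [Nat.not_prime_zero] at hprime)
  have hroots : ∀ z : ℂ, aeval z f = 0 → ‖z‖ < α := fun z hz ↦ by
    have hinj := (algebraMap ℤ ℂ).injective_int
    refine norm_lt_of_isRoot_s11 (p := f.map (algebraMap ℤ ℂ)) hα ?_
      (by rwa [IsRoot, eval_map_algebraMap])
    rw [natDegree_map_eq_of_injective hinj, leadingCoeff_map_of_injective hinj, leadingCoeff, hdeg]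
    simpa using hineq
  have hfactor : ∀ g, g ∣ f → ¬IsUnit g → d < (g.eval (n : ℤ)).natAbs := by
    intro g hgf hg
    have hgdeg : 0 < g.natDegree := Nat.pos_of_ne_zero fun h0 ↦
      hg ((isPrimitive_of_dvd hprim hgf).isUnit_of_natDegree_eq_zero h0)
    have := lt_abs_eval_of_lt_norm_sub_aroots hgdeg hd (x := n) fun z hz ↦ by
      have hz' := hroots z (aeval_eq_zero_of_dvd_aeval_eq_zero hgf (mem_aroots.mp hz).2)
      calc (d : ℝ) < ‖(n : ℂ)‖ - ‖z‖ := by rw [Complex.norm_natCast]; linarith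
        _ ≤ ‖((n : ℤ) : ℂ) - z‖ := by push_cast; exact norm_sub_norm_le _ _
    rw [← Int.cast_abs, Int.abs_eq_natAbs] at this
    exact_mod_cast this
  refine ⟨fun hu ↦ ?_, fun g h hfgh ↦ ?_⟩
  · have : (f.eval (n : ℤ)).natAbs = 1 :=
      Int.isUnit_iff_natAbs_eq.mp (hu.map (evalRingHom (n : ℤ)))
    rw [this] at hprime
    exact hprime.one_lt.not_ge (Nat.div_le_self 1 d)
  · by_contra! h'
    subst hfgh
    rw [eval_mul, Int.natAbs_mul] at hprime
    rw [Int.natCast_dvd, eval_mul, Int.natAbs_mul] at hdvd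
    rcases Nat.le_or_le_of_prime_mul_div hdvd hprime with hg | hh
    · exact (hfactor g (dvd_mul_right g h) h'.1).not_ge hg
    · exact (hfactor h (dvd_mul_left h g) h'.2).not_ge hh

open Polynomial in
theorem stmt_11 (m : ℕ) (f : ℤ[X]) (hdeg : f.natDegree = m) (hprim : f.IsPrimitive)
    (α : ℝ) (hα : 0 < α)
    (hineq : (|f.coeff m| : ℝ) * α ^ m >
      ∑ i ∈ Finset.range m, (|f.coeff i| : ℝ) * α ^ i)
    (n d : ℕ) (hn : 0 < n) (hd : 0 < d) (hnα : (n : ℝ) ≥ α + d)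
    (hdvd : (d : ℤ) ∣ f.eval (n : ℤ))
    (hprime : Nat.Prime ((f.eval (n : ℤ)).natAbs / d)) :
    Irreducible f :=
  stmt_11_general m f hdeg hprim α hα hineq n d hnα hdvd hprime
end

section
/- Let f = a_0 + a_1 z + ... + a_m z^m ∈ ℤ[z] be primitive with |a_m| α^m > |a_0| + |a_1|α + ... + |a_{m-1}|α^{m-1} for some α > 0. If there exist natural numbers n and d with n ≥ α + d such that |f(n)|/d is a prime power coprime to |f'(n)|, then f is irreducible in ℤ[z]. -/
/-!
If `|a_m| α^m > Σ_{i<m} |a_i| α^i`, every complex root of `f` lies in the open disc of radius `α`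
(the top term dominates the rest on `|z| ≥ α`). Hence for any nonconstant factor `g` of `f`,
`|g(n)| = |lc g| ∏ |n - z| > d` since each `|n - z| > n - α ≥ d`. If `f = g h` with both factors
nonconstant (the only possibility, `f` being primitive), then `|g(n)| |h(n)| = d p^k` with both
factors exceeding `d` forces `p` to divide both `g(n)` and `h(n)` (a factor prime to `p` would
divide `d`), hence also `f'(n) = g'(n) h(n) + g(n) h'(n)`, contradicting `gcd(p^k, f'(n)) = 1`.
-/

theorem pow_mul_pow_le_pow_mul_pow {R : Type*} [CommSemiring R] [PartialOrder R] [IsOrderedRing R]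
    {a b : R} (ha : 0 ≤ a) (hab : a ≤ b) {i m : ℕ} (him : i ≤ m) :
    b ^ i * a ^ m ≤ a ^ i * b ^ m := by
  obtain ⟨j, rfl⟩ := Nat.exists_eq_add_of_le him
  have hb : 0 ≤ b := ha.trans hab
  calc b ^ i * a ^ (i + j) = a ^ i * (b ^ i * a ^ j) := by ring
    _ ≤ a ^ i * (b ^ i * b ^ j) := by gcongr
    _ = a ^ i * b ^ (i + j) := by ring

theorem Nat.Prime.dvd_and_dvd_of_mul_eq_mul_pow {p k d a b : ℕ} (hp : p.Prime) (hd : 0 < d)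
    (hab : a * b = d * p ^ k) (ha : d < a) (hb : d < b) : p ∣ a ∧ p ∣ b := by
  have key : ∀ {a b : ℕ}, a * b = d * p ^ k → d < b → p ∣ b := fun {a b} hab hb => by
    by_contra hpb
    have hbd : b ∣ d := (Nat.Coprime.pow_right k (hp.coprime_iff_not_dvd.2 hpb).symm
      ).dvd_of_dvd_mul_right ⟨a, by rw [← hab, mul_comm]⟩
    exact (Nat.le_of_dvd hd hbd).not_gt hb
  exact ⟨key (by rwa [mul_comm]) ha, key hab hb⟩

namespace Polynomial

theorem norm_lt_of_isRoot_of_coeff_dominant {K : Type*} [NormedField K] {p : K[X]}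
    {m : ℕ} (hp : p.natDegree ≤ m) {α : ℝ} (hα : 0 < α)
    (hdom : ∑ i ∈ Finset.range m, ‖p.coeff i‖ * α ^ i < ‖p.coeff m‖ * α ^ m)
    {z : K} (hz : p.IsRoot z) : ‖z‖ < α := by
  by_contra! hαz
  have hlead : p.coeff m * z ^ m = -∑ i ∈ Finset.range m, p.coeff i * z ^ i := by
    have h := hz.eq_zero
    rw [eval_eq_sum_range' (Nat.lt_succ_of_le hp), Finset.sum_range_succ] at h
    linear_combination h
  have hle : ‖p.coeff m‖ * ‖z‖ ^ m ≤ ∑ i ∈ Finset.range m, ‖p.coeff i‖ * ‖z‖ ^ i :=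
    calc ‖p.coeff m‖ * ‖z‖ ^ m = ‖∑ i ∈ Finset.range m, p.coeff i * z ^ i‖ := by
          rw [← norm_pow, ← norm_mul, hlead, norm_neg]
      _ ≤ ∑ i ∈ Finset.range m, ‖p.coeff i * z ^ i‖ := norm_sum_le _ _
      _ = ∑ i ∈ Finset.range m, ‖p.coeff i‖ * ‖z‖ ^ i := by simp only [norm_mul, norm_pow]
  have hrescale : (∑ i ∈ Finset.range m, ‖p.coeff i‖ * ‖z‖ ^ i) * α ^ m ≤
      (∑ i ∈ Finset.range m, ‖p.coeff i‖ * α ^ i) * ‖z‖ ^ m := by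
    rw [Finset.sum_mul, Finset.sum_mul]
    refine Finset.sum_le_sum fun i hi => ?_
    rw [mul_assoc, mul_assoc]
    exact mul_le_mul_of_nonneg_left
      (pow_mul_pow_le_pow_mul_pow hα.le hαz (Finset.mem_range.1 hi).le) (norm_nonneg _)
  have hzm : 0 < ‖z‖ ^ m := pow_pos (hα.trans_le hαz) m
  have := calc ‖p.coeff m‖ * ‖z‖ ^ m * α ^ m
      ≤ (∑ i ∈ Finset.range m, ‖p.coeff i‖ * ‖z‖ ^ i) * α ^ m := by gcongr
    _ ≤ (∑ i ∈ Finset.range m, ‖p.coeff i‖ * α ^ i) * ‖z‖ ^ m := hrescale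
    _ < ‖p.coeff m‖ * α ^ m * ‖z‖ ^ m := mul_lt_mul_of_pos_right hdom hzm
  linarith

theorem lt_norm_eval_of_norm_roots_lt {G : ℂ[X]} (hG : 0 < G.natDegree)
    (hlc : 1 ≤ ‖G.leadingCoeff‖) {α d : ℝ} (hd : 1 ≤ d) (hroots : ∀ z ∈ G.roots, ‖z‖ < α)
    {x : ℂ} (hx : α + d ≤ ‖x‖) : d < ‖G.eval x‖ := by
  have hsplit := IsAlgClosed.splits G
  have hcard : Multiset.card G.roots = G.natDegree := splits_iff_card_roots.mp hsplit
  have hne : G.roots ≠ 0 := by rw [← Multiset.card_pos, hcard]; exact hG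
  calc d ≤ d ^ Multiset.card G.roots := le_self_pow₀ hd (by omega)
    _ = (G.roots.map fun _ => d).prod := by simp
    _ < (G.roots.map fun z => ‖x - z‖).prod :=
        Multiset.prod_map_lt_prod_map hne _ _ (fun _ _ => by linarith) fun z hz => by
          linarith [norm_sub_norm_le x z, hroots z hz]
    _ ≤ ‖G.leadingCoeff‖ * (G.roots.map fun z => ‖x - z‖).prod :=
        le_mul_of_one_le_left (Multiset.prod_nonneg fun _ h => by
          obtain ⟨z, -, rfl⟩ := Multiset.mem_map.1 h; positivity) hlc
    _ = ‖G.eval x‖ := by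
        rw [hsplit.eval_eq_prod_roots, norm_mul, ← normHom_apply (α := ℂ) (_ : Multiset ℂ).prod,
          map_multiset_prod, Multiset.map_map]
        rfl

theorem norm_lt_of_mem_aroots_of_dvd {f g : ℤ[X]} (hgf : g ∣ f) {m : ℕ}
    (hf : f.natDegree ≤ m) {α : ℝ} (hα : 0 < α)
    (hdom : ∑ i ∈ Finset.range m, |(f.coeff i : ℝ)| * α ^ i < |(f.coeff m : ℝ)| * α ^ m)
    {z : ℂ} (hz : z ∈ g.aroots ℂ) : ‖z‖ < α := by
  refine norm_lt_of_isRoot_of_coeff_dominant (p := f.map (algebraMap ℤ ℂ))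
    (natDegree_map_le.trans hf) hα (by simpa [Complex.norm_intCast] using hdom) ?_
  obtain ⟨h, rfl⟩ := hgf
  rw [IsRoot, eval_map_algebraMap, map_mul, (mem_aroots.1 hz).2, zero_mul]

theorem lt_natAbs_eval_of_dvd {f g : ℤ[X]} (hgf : g ∣ f) (hg : 0 < g.natDegree)
    {m : ℕ} (hf : f.natDegree ≤ m) {α : ℝ} (hα : 0 < α)
    (hdom : ∑ i ∈ Finset.range m, |(f.coeff i : ℝ)| * α ^ i < |(f.coeff m : ℝ)| * α ^ m)
    {d : ℕ} (hd : 0 < d) {x : ℤ} (hx : α + d ≤ x) : d < (g.eval x).natAbs := by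
  have hinj : Function.Injective (algebraMap ℤ ℂ) := RingHom.injective_int _
  have hg0 : g ≠ 0 := ne_zero_of_natDegree_gt hg
  have hlc : 1 ≤ ‖(g.map (algebraMap ℤ ℂ)).leadingCoeff‖ := by
    rw [leadingCoeff_map_of_injective hinj, algebraMap_int_eq, eq_intCast, Complex.norm_intCast]
    exact_mod_cast Int.one_le_abs (leadingCoeff_ne_zero.2 hg0)
  have hx' : α + d ≤ ‖(x : ℂ)‖ := by
    rw [Complex.norm_intCast]
    exact hx.trans (le_abs_self _)
  have key := lt_norm_eval_of_norm_roots_lt (natDegree_map_eq_of_injective hinj g ▸ hg) hlc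
    (Nat.one_le_cast.2 hd) (fun z hz => norm_lt_of_mem_aroots_of_dvd hgf hf hα hdom hz) hx'
  rw [eval_map_algebraMap, ← eq_intCast (algebraMap ℤ ℂ) x,
    aeval_algebraMap_apply_eq_algebraMap_eval, eq_intCast, Complex.norm_intCast, ← Int.cast_abs,
    ← Nat.cast_natAbs] at key
  exact_mod_cast key

theorem dvd_eval_derivative_mul {R : Type*} [CommSemiring R] {g h : R[X]} {x a : R}
    (hg : a ∣ g.eval x) (hh : a ∣ h.eval x) : a ∣ (derivative (g * h)).eval x := by
  rw [derivative_mul, eval_add, eval_mul, eval_mul]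
  exact dvd_add (hh.mul_left _) (hg.mul_right _)

theorem IsPrimitive.natDegree_pos_of_not_isUnit {R : Type*} [CommSemiring R]
    {p : R[X]} (hp : p.IsPrimitive) (hu : ¬IsUnit p) : 0 < p.natDegree := by
  rw [Nat.pos_iff_ne_zero]
  intro h0
  rw [eq_C_of_natDegree_eq_zero h0] at hu hp
  exact hu ((hp _ dvd_rfl).map C)

end Polynomial

open Polynomial in
theorem stmt_12_general (m : ℕ) (f : ℤ[X]) (hdeg : f.natDegree = m) (hprim : f.IsPrimitive)
    (α : ℝ) (hα : 0 < α)
    (hineq : (|f.coeff m| : ℝ) * α ^ m >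
      ∑ i ∈ Finset.range m, (|f.coeff i| : ℝ) * α ^ i)
    (n d : ℕ) (hd : 0 < d) (hnα : (n : ℝ) ≥ α + d)
    (hdvd : (d : ℤ) ∣ f.eval (n : ℤ))
    (hpp : ∃ p k : ℕ, p.Prime ∧ 1 ≤ k ∧ (f.eval (n : ℤ)).natAbs / d = p ^ k ∧
      Nat.Coprime (p ^ k) ((Polynomial.derivative f).eval (n : ℤ)).natAbs) :
    Irreducible f := by
  obtain ⟨p, k, hp, hk, hquot, hcop⟩ := hpp
  have hfn : (f.eval (n : ℤ)).natAbs = d * p ^ k := by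
    rw [← hquot, Nat.mul_div_cancel' (Int.ofNat_dvd_left.1 hdvd)]
  have hp_ndvd : ¬(p : ℤ) ∣ (derivative f).eval (n : ℤ) := fun h =>
    hp.one_lt.ne' ((Nat.Coprime.coprime_dvd_left (dvd_pow_self p (by omega)) hcop).eq_one_of_dvd
      (Int.ofNat_dvd_left.1 h))
  refine ⟨fun hu => ?_, fun g h hgh => ?_⟩
  · have h1 := Int.isUnit_iff_natAbs_eq.mp (hu.map (evalRingHom (n : ℤ)))
    rw [coe_evalRingHom, hfn, mul_eq_one, Nat.pow_eq_one] at h1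
    exact hp.one_lt.ne' (h1.2.resolve_right (by omega))
  · by_contra! hunits
    have hlarge : ∀ q, q ∣ f → ¬IsUnit q → d < (q.eval (n : ℤ)).natAbs := fun q hq hqu =>
      lt_natAbs_eval_of_dvd hq ((isPrimitive_of_dvd hprim hq).natDegree_pos_of_not_isUnit hqu)
        hdeg.le hα hineq hd (by exact_mod_cast hnα)
    obtain ⟨hpg, hph⟩ := hp.dvd_and_dvd_of_mul_eq_mul_pow hd
      (by rw [← Int.natAbs_mul, ← eval_mul, ← hgh, hfn])
      (hlarge g ⟨h, hgh⟩ hunits.1) (hlarge h ⟨g, hgh.trans (mul_comm g h)⟩ hunits.2)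
    exact hp_ndvd (hgh ▸ dvd_eval_derivative_mul (Int.ofNat_dvd_left.2 hpg)
      (Int.ofNat_dvd_left.2 hph))

open Polynomial in
theorem stmt_12 (m : ℕ) (f : ℤ[X]) (hdeg : f.natDegree = m) (hprim : f.IsPrimitive)
    (α : ℝ) (hα : 0 < α)
    (hineq : (|f.coeff m| : ℝ) * α ^ m >
      ∑ i ∈ Finset.range m, (|f.coeff i| : ℝ) * α ^ i)
    (n d : ℕ) (hn : 0 < n) (hd : 0 < d) (hnα : (n : ℝ) ≥ α + d)
    (hdvd : (d : ℤ) ∣ f.eval (n : ℤ))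
    (hpp : ∃ p k : ℕ, p.Prime ∧ 1 ≤ k ∧ (f.eval (n : ℤ)).natAbs / d = p ^ k ∧
      Nat.Coprime (p ^ k) ((Polynomial.derivative f).eval (n : ℤ)).natAbs) :
    Irreducible f :=
  stmt_12_general m f hdeg hprim α hα hineq n d hd hnα hdvd hpp
end

section
/- Let f = a_0 + a_1 z + ... + a_m z^m ∈ ℤ[z] be primitive, and suppose there exist reals 0 < α < β and an index j ∈ {0,...,m} with |a_j| α^j > Σ_{i≠j} |a_i| β^i. If there exist natural numbers n, d with β - d ≥ n ≥ α + d such that |f(n)|/d is prime, or is a prime power coprime to |f'(n)|, then f is irreducible in ℤ[z]. -/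
/-!
The dominant term `a_j z^j` forces every complex root `z` of `f` to satisfy `‖z‖ < α` or
`‖z‖ > β`, so every root lies at distance more than `d` from `n`. If `f = a * b` with `a`, `b`
non-units, both factors have positive degree because `f` is primitive, and writing `a(n)` as its
leading coefficient times `∏ (n - r)` over its complex roots gives `|a(n)| > d ^ deg a ≥ d`;
likewise `|b(n)| > d`. But `|a(n)| |b(n)| = d q` with `q = |f(n)| / d`. If `q` is prime, or a prime
power `p ^ k` where `p` cannot divide both `a(n)` and `b(n)` (it would then divide
`f'(n) = a'(n) b(n) + a(n) b'(n)`), one of `|a(n)|`, `|b(n)|` must divide `d`: a contradiction.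
-/

open Polynomial Finset

theorem Polynomial.norm_coeff_smul_pow_le_of_aeval_eq_zero {R A : Type*} [CommSemiring R]
    [SeminormedRing A] [Algebra R A] {p : R[X]} {z : A} (hz : aeval z p = 0) (j : ℕ) :
    ‖p.coeff j • z ^ j‖ ≤
      ∑ i ∈ (range (p.natDegree + 1)).erase j, ‖p.coeff i • z ^ i‖ := by
  by_cases hj : j ∈ range (p.natDegree + 1)
  · have hsum := add_sum_erase _ (fun i => p.coeff i • z ^ i) hj
    rw [← aeval_eq_sum_range, hz, add_eq_zero_iff_eq_neg] at hsum
    rw [hsum, norm_neg]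
    exact norm_sum_le _ _
  · rw [coeff_eq_zero_of_natDegree_lt (by simpa [Nat.lt_succ_iff] using hj), zero_smul, norm_zero]
    exact sum_nonneg fun _ _ => norm_nonneg _

theorem norm_lt_or_lt_norm_of_aeval_eq_zero {f : ℤ[X]} {α β : ℝ} (hα : 0 ≤ α) {j : ℕ}
    (hineq : ∑ i ∈ (range (f.natDegree + 1)).erase j, |(f.coeff i : ℝ)| * β ^ i <
      |(f.coeff j : ℝ)| * α ^ j)
    {z : ℂ} (hz : aeval z f = 0) : ‖z‖ < α ∨ β < ‖z‖ := by
  by_contra! h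
  have hnorm (i : ℕ) : ‖f.coeff i • z ^ i‖ = |(f.coeff i : ℝ)| * ‖z‖ ^ i := by simp
  refine hineq.not_ge ?_
  calc |(f.coeff j : ℝ)| * α ^ j ≤ |(f.coeff j : ℝ)| * ‖z‖ ^ j := by gcongr; exact h.1
    _ ≤ ∑ i ∈ (range (f.natDegree + 1)).erase j, |(f.coeff i : ℝ)| * ‖z‖ ^ i := by
      simpa only [hnorm] using norm_coeff_smul_pow_le_of_aeval_eq_zero hz j
    _ ≤ ∑ i ∈ (range (f.natDegree + 1)).erase j, |(f.coeff i : ℝ)| * β ^ i := by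
      gcongr; exact h.2

theorem Polynomial.Splits.norm_leadingCoeff_mul_pow_lt_norm_eval {K : Type*} [NormedField K]
    {g : K[X]} (hg : g.Splits) (hdeg : 0 < g.natDegree) {w : K} {c : ℝ} (hc : 0 < c)
    (hroots : ∀ r ∈ g.roots, c < ‖w - r‖) :
    ‖g.leadingCoeff‖ * c ^ g.natDegree < ‖g.eval w‖ := by
  have hlc : 0 < ‖g.leadingCoeff‖ := by
    simpa using ne_zero_of_natDegree_gt hdeg
  have hprod : ‖(g.roots.map (w - ·)).prod‖ = (g.roots.map fun r => ‖w - r‖).prod :=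
    (map_multiset_prod (normHom (α := K)) _).trans (by rw [Multiset.map_map]; rfl)
  rw [hg.eval_eq_prod_roots, norm_mul, hprod, hg.natDegree_eq_card_roots,
    ← Multiset.prod_replicate, ← Multiset.map_const']
  gcongr
  exact Multiset.prod_map_lt_prod_map (hg.roots_ne_zero hdeg.ne') _ _ (fun _ _ => hc) hroots

theorem Polynomial.IsPrimitive.natDegree_pos_of_not_isUnit_s13 {R : Type*} [CommSemiring R]
    {p : R[X]} (hp : p.IsPrimitive) (hu : ¬IsUnit p) : 0 < p.natDegree := by
  refine Nat.pos_of_ne_zero fun h => hu ?_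
  obtain ⟨c, rfl⟩ := natDegree_eq_zero.mp h
  exact isUnit_C.mpr (hp c dvd_rfl)

theorem lt_natAbs_eval_of_roots_far {g : ℤ[X]} (hdeg : 0 < g.natDegree) {x : ℤ} {d : ℕ}
    (hd : 0 < d) (hroots : ∀ z : ℂ, aeval z g = 0 → (d : ℝ) < ‖(x : ℂ) - z‖) :
    d < (g.eval x).natAbs := by
  set G := g.map (algebraMap ℤ ℂ)
  have hinj : Function.Injective (algebraMap ℤ ℂ) := RingHom.injective_int _
  have hG : G.natDegree = g.natDegree := natDegree_map_eq_of_injective hinj g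
  have hlc : 1 ≤ ‖G.leadingCoeff‖ := by
    rw [leadingCoeff_map_of_injective hinj, algebraMap_int_eq, eq_intCast, Complex.norm_intCast]
    exact_mod_cast Int.one_le_abs (leadingCoeff_ne_zero.mpr (ne_zero_of_natDegree_gt hdeg))
  have hlt := (IsAlgClosed.splits G).norm_leadingCoeff_mul_pow_lt_norm_eval (hG ▸ hdeg)
    (w := (x : ℂ)) (Nat.cast_pos.mpr hd) fun r hr => hroots r (mem_aroots.mp hr).2
  rw [hG, eval_map_algebraMap] at hlt
  have : (d : ℝ) < (g.eval x).natAbs := calc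
    (d : ℝ) ≤ (d : ℝ) ^ g.natDegree := by exact_mod_cast Nat.le_self_pow hdeg.ne' d
    _ ≤ ‖G.leadingCoeff‖ * (d : ℝ) ^ g.natDegree :=
      le_mul_of_one_le_left (by positivity) hlc
    _ < ‖aeval (x : ℂ) g‖ := hlt
    _ = (g.eval x).natAbs := by
      simpa using congrArg norm (aeval_algebraMap_apply_eq_algebraMap_eval (A := ℂ) x g)
  exact_mod_cast this

theorem Polynomial.dvd_eval_derivative_mul_s13 {R : Type*} [CommSemiring R] {a b : R[X]} {x c : R}
    (ha : c ∣ a.eval x) (hb : c ∣ b.eval x) : c ∣ (derivative (a * b)).eval x := by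
  rw [derivative_mul, eval_add, eval_mul, eval_mul]
  exact dvd_add (dvd_mul_of_dvd_right hb _) (dvd_mul_of_dvd_left ha _)

theorem dvd_or_dvd_of_mul_eq_mul_prime {A B d q : ℕ} (hq : q.Prime) (h : A * B = d * q) :
    A ∣ d ∨ B ∣ d := by
  rcases hq.dvd_mul.mp (h ▸ dvd_mul_left q d) with ⟨s, rfl⟩ | ⟨s, rfl⟩
  · exact Or.inr ⟨s, Nat.eq_of_mul_eq_mul_left hq.pos (by linarith)⟩
  · exact Or.inl ⟨s, Nat.eq_of_mul_eq_mul_left hq.pos (by linarith)⟩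

theorem dvd_or_dvd_of_mul_eq_mul_prime_pow {A B d p k : ℕ} (hp : p.Prime)
    (h : A * B = d * p ^ k) (hAB : ¬(p ∣ A ∧ p ∣ B)) : A ∣ d ∨ B ∣ d := by
  rcases not_and_or.mp hAB with hA | hB
  · exact Or.inl ((((hp.coprime_iff_not_dvd).mpr hA).symm.pow_right k).dvd_of_dvd_mul_right
      ⟨B, h.symm⟩)
  · exact Or.inr ((((hp.coprime_iff_not_dvd).mpr hB).symm.pow_right k).dvd_of_dvd_mul_right
      ⟨A, by rw [← h, mul_comm]⟩)

theorem lt_natAbs_eval_of_dvd {f g : ℤ[X]} (hprim : f.IsPrimitive) {α β : ℝ}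
    (hroots : ∀ z : ℂ, aeval z f = 0 → ‖z‖ < α ∨ β < ‖z‖) {n d : ℕ} (hd : 0 < d)
    (hnα : α + d ≤ n) (hnβ : n ≤ β - d) (hgf : g ∣ f) (hg : ¬IsUnit g) :
    d < (g.eval (n : ℤ)).natAbs := by
  have hdeg := (isPrimitive_of_dvd hprim hgf).natDegree_pos_of_not_isUnit_s13 hg
  refine lt_natAbs_eval_of_roots_far hdeg hd fun z hz => ?_
  have hn : ‖(n : ℂ)‖ = n := Complex.norm_natCast n
  push_cast
  rcases hroots z (aeval_eq_zero_of_dvd_aeval_eq_zero hgf hz) with h | h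
  · linarith [norm_sub_norm_le (n : ℂ) z]
  · linarith [norm_sub_norm_le z (n : ℂ), norm_sub_rev z (n : ℂ)]

theorem natAbs_eval_dvd_or_natAbs_eval_dvd {a b : ℤ[X]} {x : ℤ} {d q : ℕ}
    (h : ((a * b).eval x).natAbs = d * q)
    (hq : q.Prime ∨ ∃ p k : ℕ, p.Prime ∧ 1 ≤ k ∧ q = p ^ k ∧
      Nat.Coprime (p ^ k) ((derivative (a * b)).eval x).natAbs) :
    (a.eval x).natAbs ∣ d ∨ (b.eval x).natAbs ∣ d := by
  rw [eval_mul, Int.natAbs_mul] at h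
  rcases hq with hq | ⟨p, k, hp, hk, rfl, hcop⟩
  · exact dvd_or_dvd_of_mul_eq_mul_prime hq h
  refine dvd_or_dvd_of_mul_eq_mul_prime_pow hp h fun ⟨hpa, hpb⟩ => hp.ne_one ?_
  have hpder : p ∣ ((derivative (a * b)).eval x).natAbs := Int.natCast_dvd.mp
    (dvd_eval_derivative_mul_s13 (Int.natCast_dvd.mpr hpa) (Int.natCast_dvd.mpr hpb))
  exact (hcop.coprime_dvd_left (dvd_pow_self p (by omega))).eq_one_of_dvd hpder

open Polynomial in
theorem stmt_13_general (m : ℕ) (f : ℤ[X]) (hdeg : f.natDegree = m) (hprim : f.IsPrimitive)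
    (α β : ℝ) (hα : 0 < α) (j : ℕ)
    (hineq : (|f.coeff j| : ℝ) * α ^ j >
      ∑ i ∈ (Finset.range (m + 1)).erase j, (|f.coeff i| : ℝ) * β ^ i)
    (n d : ℕ) (hd : 0 < d)
    (hnα : (n : ℝ) ≥ α + d) (hnβ : (n : ℝ) ≤ β - d)
    (hdvd : (d : ℤ) ∣ f.eval (n : ℤ))
    (hcond : Nat.Prime ((f.eval (n : ℤ)).natAbs / d) ∨
      ∃ p k : ℕ, p.Prime ∧ 1 ≤ k ∧ (f.eval (n : ℤ)).natAbs / d = p ^ k ∧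
        Nat.Coprime (p ^ k) ((Polynomial.derivative f).eval (n : ℤ)).natAbs) :
    Irreducible f := by
  subst hdeg
  have hroots (z : ℂ) (hz : aeval z f = 0) : ‖z‖ < α ∨ β < ‖z‖ :=
    norm_lt_or_lt_norm_of_aeval_eq_zero hα.le hineq hz
  obtain ⟨q, hfq⟩ : d ∣ (f.eval (n : ℤ)).natAbs := Int.natCast_dvd.mp hdvd
  rw [hfq, Nat.mul_div_cancel_left q hd] at hcond
  have hq : 1 < q := by
    rcases hcond with hq | ⟨p, k, hp, hk, rfl, -⟩
    exacts [hq.one_lt, Nat.one_lt_pow (by omega) hp.one_lt]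
  refine ⟨fun hu => ?_, fun a b hab => ?_⟩
  · have hdq : d * q = 1 := hfq ▸ Int.isUnit_iff_natAbs_eq.mp (hu.map (evalRingHom (n : ℤ)))
    exact hq.ne' (Nat.eq_one_of_mul_eq_one_left hdq)
  by_contra! ⟨ha, hb⟩
  subst hab
  have hfar (g : ℤ[X]) (hg : g ∣ a * b) (hu : ¬IsUnit g) : d < (g.eval (n : ℤ)).natAbs :=
    lt_natAbs_eval_of_dvd hprim hroots hd hnα hnβ hg hu
  rcases natAbs_eval_dvd_or_natAbs_eval_dvd hfq hcond with h | h
  · exact (Nat.le_of_dvd hd h).not_gt (hfar a (dvd_mul_right a b) ha)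
  · exact (Nat.le_of_dvd hd h).not_gt (hfar b (dvd_mul_left b a) hb)

open Polynomial in
theorem stmt_13 (m : ℕ) (f : ℤ[X]) (hdeg : f.natDegree = m) (hprim : f.IsPrimitive)
    (α β : ℝ) (hα : 0 < α) (hαβ : α < β) (j : ℕ) (hj : j ≤ m)
    (hineq : (|f.coeff j| : ℝ) * α ^ j >
      ∑ i ∈ (Finset.range (m + 1)).erase j, (|f.coeff i| : ℝ) * β ^ i)
    (n d : ℕ) (hn : 0 < n) (hd : 0 < d)
    (hnα : (n : ℝ) ≥ α + d) (hnβ : (n : ℝ) ≤ β - d)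
    (hdvd : (d : ℤ) ∣ f.eval (n : ℤ))
    (hcond : Nat.Prime ((f.eval (n : ℤ)).natAbs / d) ∨
      ∃ p k : ℕ, p.Prime ∧ 1 ≤ k ∧ (f.eval (n : ℤ)).natAbs / d = p ^ k ∧
        Nat.Coprime (p ^ k) ((Polynomial.derivative f).eval (n : ℤ)).natAbs) :
    Irreducible f :=
  stmt_13_general m f hdeg hprim α β hα j hineq n d hd hnα hnβ hdvd hcond
end

section
/- For integers k ≥ m + 2 ≥ 4, a prime p, and 1 ≤ d ≤ p(p-1) with p ∤ d, the polynomial F_3 = -p^2 + z ± p^{k-m} d z^m is irreducible in ℤ[z]. -/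
/-!
Modulo `p` the trinomial `F = -p² + X + p^e u X^m` becomes `X`, so in a factorisation `F = G * H`
one factor, say `G`, is a unit modulo `p`: `p` divides neither `G(0)` nor the coefficient of `X`
in `H`, and `G(0) = ±1` as it divides `p²`.

`p`-adically, take `c = p^(e/(m-1))`, where `e/(m-1)` is the slope of the Newton polygon of `F`
between `X` and `X^m`. The Gauss norm of `F` at `c` is at most `c`, that of `H` at least `c`, and the Gauss norm is
multiplicative, so the Gauss norm of `G` is at most `1`; on the leading coefficient this says
`p^(e deg G) ≤ |lc G|^(m-1)`.

Archimedeanly, every complex root `r` of `F` satisfies `p² - 1 ≤ p^e |u| |r|^m`, and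
`1 = |G(0)| = |lc G| ∏ |r|` over the roots of `G`, so `(p² - 1)^(deg G) |lc G|^m ≤ (p^e |u|)^(deg G)`.
The two bounds give `(p² - 1)^(deg G) ≤ |u|^(deg G)`, which forces `deg G = 0` as `|u| < p² - 1`.
-/

open Polynomial

namespace Int

theorem abs_eq_one_of_dvd_pow_of_not_dvd {p : ℕ} (hp : p.Prime) {n : ℤ} {k : ℕ}
    (h : n ∣ (p : ℤ) ^ k) (hn : ¬ (p : ℤ) ∣ n) : |n| = 1 := by
  have hcop : IsCoprime n ((p : ℤ) ^ k) :=
    ((Nat.prime_iff_prime_int.mp hp).coprime_iff_not_dvd.mpr hn).symm.pow_right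
  exact Int.isUnit_iff_abs_eq.mp (hcop.isUnit_of_dvd' dvd_rfl h)

noncomputable def padicAbv (p : ℕ) [Fact p.Prime] : AbsoluteValue ℤ ℝ :=
  (Rat.AbsoluteValue.padic p).comp (f := Int.castRingHom ℚ) Int.cast_injective

variable {p : ℕ} [Fact p.Prime]

theorem padicAbv_apply (n : ℤ) : padicAbv p n = padicNorm p n := rfl

theorem isNonarchimedean_padicAbv : IsNonarchimedean (padicAbv p) := fun m n ↦ by
  simp only [padicAbv_apply, Int.cast_add]
  exact_mod_cast padicNorm.nonarchimedean (q := (m : ℚ)) (r := n)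

theorem padicAbv_le_one (n : ℤ) : padicAbv p n ≤ 1 := Rat.AbsoluteValue.padic_le_one p n

theorem padicAbv_eq_one_iff (n : ℤ) : padicAbv p n = 1 ↔ ¬ (p : ℤ) ∣ n := by
  rw [padicAbv_apply, ← padicNorm.int_eq_one_iff]
  norm_cast

theorem padicAbv_pow_mul (e : ℕ) {u : ℤ} (hu : ¬ (p : ℤ) ∣ u) :
    padicAbv p ((p : ℤ) ^ e * u) = ((p : ℝ) ^ e)⁻¹ := by
  rw [map_mul, map_pow, (padicAbv_eq_one_iff u).mpr hu, mul_one, padicAbv_apply]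
  push_cast
  rw [padicNorm.padicNorm_p_of_prime]
  push_cast
  rw [inv_pow]

theorem one_le_abs_mul_padicAbv {n : ℤ} (hn : n ≠ 0) : 1 ≤ |(n : ℝ)| * padicAbv p n := by
  have hp : (0 : ℝ) < p := by exact_mod_cast (Fact.out : p.Prime).pos
  have hdvd : (p : ℤ) ^ padicValInt p n ≤ |n| :=
    Int.le_of_dvd (abs_pos.mpr hn) ((dvd_abs _ _).mpr (padicValInt_dvd n))
  rw [padicAbv_apply, padicNorm.eq_zpow_of_nonzero (by exact_mod_cast hn), padicValRat.of_int]
  push_cast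
  rw [zpow_neg, zpow_natCast, ← div_eq_mul_inv, one_le_div (by positivity)]
  exact_mod_cast hdvd

end Int

namespace Polynomial

variable {R : Type*} [Ring R] {v : AbsoluteValue R ℝ} {c : ℝ}

theorem gaussNorm_neg_C_add_X_add_C_mul_X_pow_le [Nontrivial R] (hna : IsNonarchimedean v)
    (hc : 1 ≤ c) {b a : R} {m : ℕ} (hb : v b ≤ 1) (ha : v a * c ^ m ≤ c) :
    (-C b + X + C a * X ^ m).gaussNorm v c ≤ c := by
  have hna' := isNonarchimedean_gaussNorm v hna (c := c) (by linarith)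
  have hX : (X : R[X]).gaussNorm v c = c := by
    rw [← monomial_one_one_eq_X, gaussNorm_monomial, map_one, pow_one, one_mul]
  refine (hna' _ _).trans (max_le ((hna' _ _).trans (max_le ?_ hX.le)) ?_)
  · rw [← C_neg, gaussNorm_C, map_neg_eq_map]
    linarith
  · rwa [C_mul_X_pow_eq_monomial, gaussNorm_monomial]

theorem abv_leadingCoeff_mul_pow_natDegree_le_one (hna : IsNonarchimedean v) (hc : 0 < c)
    {F G H : R[X]} (hGH : G * H = F) (hF : F.gaussNorm v c ≤ c) (hH : 1 ≤ v (H.coeff 1)) :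
    v G.leadingCoeff * c ^ G.natDegree ≤ 1 := by
  have hG : v G.leadingCoeff * c ^ G.natDegree ≤ G.gaussNorm v c :=
    G.le_gaussNorm v hc.le G.natDegree
  have hH : c ≤ H.gaussNorm v c := by
    have := H.le_gaussNorm v hc.le 1
    rw [pow_one] at this
    nlinarith
  have hGH : G.gaussNorm v c * H.gaussNorm v c ≤ c := by
    rwa [← gaussNorm_mul hna hc, hGH]
  nlinarith [G.gaussNorm_nonneg v hc.le]

theorem coeff_ne_zero_of_mul_eq_X {K : Type*} [CommRing K] [IsDomain K] {g h : K[X]}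
    (hgh : g * h = X) : (g.coeff 0 ≠ 0 ∧ h.coeff 1 ≠ 0) ∨ (h.coeff 0 ≠ 0 ∧ g.coeff 1 ≠ 0) := by
  have h0 : g.coeff 0 * h.coeff 0 = 0 := by
    rw [← mul_coeff_zero, hgh, coeff_X_zero]
  have h1 : g.coeff 0 * h.coeff 1 + g.coeff 1 * h.coeff 0 = 1 := by
    rw [← coeff_X_one (R := K), ← hgh, coeff_mul, Finset.Nat.antidiagonal_succ]
    simp
  rcases mul_eq_zero.mp h0 with hg0 | hh0
  · rw [hg0, zero_mul, zero_add] at h1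
    exact .inr ⟨right_ne_zero_of_mul_eq_one h1, left_ne_zero_of_mul_eq_one h1⟩
  · rw [hh0, mul_zero, add_zero] at h1
    exact .inl ⟨left_ne_zero_of_mul_eq_one h1, right_ne_zero_of_mul_eq_one h1⟩

end Polynomial

theorem norm_sub_one_le_norm_mul_norm_pow {K : Type*} [NormedField K] {a b z : K} {m : ℕ}
    (hz : b = z + a * z ^ m) (hab : ‖b‖ - 1 ≤ ‖a‖) : ‖b‖ - 1 ≤ ‖a‖ * ‖z‖ ^ m := by
  have hb : ‖b‖ ≤ ‖z‖ + ‖a‖ * ‖z‖ ^ m := by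
    simpa [hz, norm_mul, norm_pow] using norm_add_le z (a * z ^ m)
  rcases le_or_gt ‖z‖ 1 with hz1 | hz1
  · linarith
  · nlinarith [one_le_pow₀ (n := m) hz1.le, norm_nonneg a]

theorem pow_natDegree_mul_norm_leadingCoeff_pow_le {G : ℂ[X]} {B Q : ℝ} {m : ℕ} (hB : 0 ≤ B)
    (hroots : ∀ r ∈ G.roots, B ≤ Q * ‖r‖ ^ m) :
    B ^ G.natDegree * ‖G.leadingCoeff‖ ^ m ≤ Q ^ G.natDegree * ‖G.coeff 0‖ ^ m := by
  have hsplits : G.Splits := IsAlgClosed.splits G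
  have hcard : Multiset.card G.roots = G.natDegree := hsplits.natDegree_eq_card_roots.symm
  have hcoeff : ‖G.coeff 0‖ = ‖G.leadingCoeff‖ * (G.roots.map (‖·‖)).prod := by
    rw [hsplits.coeff_zero_eq_leadingCoeff_mul_prod_roots, norm_mul, norm_mul, norm_pow,
      norm_neg, norm_one, one_pow, one_mul]
    congr 1
    exact map_multiset_prod (normHom : ℂ →*₀ ℝ) _
  have hprod : (G.roots.map fun _ ↦ B).prod ≤ (G.roots.map fun r ↦ Q * ‖r‖ ^ m).prod :=
    Multiset.prod_map_le_prod_map₀ _ _ (fun _ _ ↦ hB) hroots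
  rw [Multiset.map_const', Multiset.prod_replicate, hcard, Multiset.prod_map_mul,
    Multiset.map_const', Multiset.prod_replicate, hcard, Multiset.prod_map_pow] at hprod
  rw [hcoeff, mul_pow]
  calc B ^ G.natDegree * ‖G.leadingCoeff‖ ^ m
      ≤ Q ^ G.natDegree * (G.roots.map (‖·‖)).prod ^ m * ‖G.leadingCoeff‖ ^ m := by gcongr
    _ = _ := by ring

section Trinomial

variable {m : ℕ} {G H : ℤ[X]}

theorem pow_mul_natDegree_le_abs_leadingCoeff_pow {p : ℕ} [Fact p.Prime] {e : ℕ} (hm : 2 ≤ m)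
    {b u : ℤ} (hu : ¬ (p : ℤ) ∣ u) (hGH : G * H = -C b + X + C ((p : ℤ) ^ e * u) * X ^ m)
    (hH : ¬ (p : ℤ) ∣ H.coeff 1) (hG : G ≠ 0) :
    (p : ℤ) ^ (e * G.natDegree) ≤ |G.leadingCoeff| ^ (m - 1) := by
  have hp : (1 : ℝ) ≤ p := by exact_mod_cast (Fact.out : p.Prime).one_le
  set c : ℝ := ((p : ℝ) ^ e) ^ ((↑(m - 1) : ℝ)⁻¹)
  have hcm : c ^ (m - 1) = (p : ℝ) ^ e := Real.rpow_inv_natCast_pow (by positivity) (by omega)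
  have hc1 : 1 ≤ c := Real.one_le_rpow (one_le_pow₀ hp) (by positivity)
  have hF : (-C b + X + C ((p : ℤ) ^ e * u) * X ^ m).gaussNorm (Int.padicAbv p) c ≤ c := by
    refine gaussNorm_neg_C_add_X_add_C_mul_X_pow_le Int.isNonarchimedean_padicAbv hc1
      (Int.padicAbv_le_one b) (le_of_eq ?_)
    rw [Int.padicAbv_pow_mul e hu, ← Nat.sub_add_cancel (by omega : 1 ≤ m), pow_succ, hcm,
      ← mul_assoc, inv_mul_cancel₀ (by positivity), one_mul]
  have hlead := abv_leadingCoeff_mul_pow_natDegree_le_one Int.isNonarchimedean_padicAbv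
    (by positivity) hGH hF ((Int.padicAbv_eq_one_iff _).mpr hH).ge
  have hL := Int.one_le_abs_mul_padicAbv (p := p) (leadingCoeff_ne_zero.mpr hG)
  have hcL : c ^ G.natDegree ≤ |(G.leadingCoeff : ℝ)| := by
    nlinarith [abs_nonneg (G.leadingCoeff : ℝ), pow_nonneg (zero_le_one.trans hc1) G.natDegree]
  have : ((p : ℝ) ^ e) ^ G.natDegree ≤ |(G.leadingCoeff : ℝ)| ^ (m - 1) := by
    rw [← hcm, ← pow_mul, mul_comm, pow_mul]
    gcongr
  rw [← pow_mul] at this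
  exact_mod_cast this

theorem sub_one_pow_mul_abs_leadingCoeff_pow_le {b a : ℤ} (hb : b ≠ 0) (hab : |b| - 1 ≤ |a|)
    (hGH : G * H = -C b + X + C a * X ^ m) :
    (|b| - 1) ^ G.natDegree * |G.leadingCoeff| ^ m ≤ |a| ^ G.natDegree * |G.coeff 0| ^ m := by
  have hinj : Function.Injective (Int.castRingHom ℂ) := Int.cast_injective
  have hroots : ∀ r ∈ (G.map (Int.castRingHom ℂ)).roots, (|b| - 1 : ℝ) ≤ |a| * ‖r‖ ^ m := by
    intro r hr
    have hF : eval r ((G * H).map (Int.castRingHom ℂ)) = 0 := by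
      rw [Polynomial.map_mul, eval_mul, (mem_roots'.mp hr).2.eq_zero, zero_mul]
    rw [hGH] at hF
    simp only [Polynomial.map_add, Polynomial.map_neg, Polynomial.map_mul, Polynomial.map_C,
      map_X, Polynomial.map_pow, eval_add, eval_neg, eval_C, eval_X, eval_mul, eval_pow] at hF
    simp only [eq_intCast] at hF
    have := norm_sub_one_le_norm_mul_norm_pow (a := (a : ℂ)) (b := (b : ℂ)) (z := r) (m := m)
      (by linear_combination -hF)
      (by rw [Complex.norm_intCast, Complex.norm_intCast]; exact_mod_cast hab)
    rw [Complex.norm_intCast, Complex.norm_intCast] at this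
    exact_mod_cast this
  have hB : (0 : ℝ) ≤ |b| - 1 := by
    rw [sub_nonneg]
    exact_mod_cast Int.one_le_abs hb
  have := pow_natDegree_mul_norm_leadingCoeff_pow_le hB hroots
  rw [natDegree_map_eq_of_injective hinj, leadingCoeff_map_of_injective hinj, coeff_map] at this
  simp only [eq_intCast, Complex.norm_intCast] at this
  exact_mod_cast this

variable {p : ℕ} [Fact p.Prime] {e : ℕ} {u : ℤ}

theorem natDegree_eq_zero_of_mul_eq (he : 2 ≤ e) (hm : 2 ≤ m) (hu : ¬ (p : ℤ) ∣ u)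
    (hup : |u| < (p : ℤ) ^ 2 - 1)
    (hGH : G * H = -C ((p : ℤ) ^ 2) + X + C ((p : ℤ) ^ e * u) * X ^ m)
    (hG0 : ¬ (p : ℤ) ∣ G.coeff 0) (hH1 : ¬ (p : ℤ) ∣ H.coeff 1) : G.natDegree = 0 := by
  by_contra hg
  have hG : G ≠ 0 := by rintro rfl; simp at hG0
  have hp : (2 : ℤ) ≤ p := by exact_mod_cast (Fact.out : p.Prime).two_le
  have hu0 : 1 ≤ |u| := Int.one_le_abs (by rintro rfl; simp at hu)
  have habs : |(p : ℤ) ^ e * u| = p ^ e * |u| := by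
    rw [abs_mul, abs_of_nonneg (by positivity)]
  have hpe : (p : ℤ) ^ 2 ≤ p ^ e := pow_le_pow_right₀ (by omega) he
  have hG0dvd : G.coeff 0 ∣ (p : ℤ) ^ 2 := ⟨-H.coeff 0, by
    have := congrArg (coeff · 0) hGH
    rw [mul_coeff_zero, coeff_add, coeff_add, coeff_neg, coeff_C_zero, coeff_X_zero,
      coeff_C_mul_X_pow, if_neg (by omega)] at this
    linear_combination this⟩
  have harch := sub_one_pow_mul_abs_leadingCoeff_pow_le (by positivity)
    (by rw [habs, abs_of_nonneg (by positivity)]; nlinarith) hGH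
  rw [Int.abs_eq_one_of_dvd_pow_of_not_dvd Fact.out hG0dvd hG0, one_pow, mul_one, habs,
    abs_of_nonneg (by positivity : (0 : ℤ) ≤ p ^ 2), mul_pow, ← pow_mul] at harch
  have hpadic := pow_mul_natDegree_le_abs_leadingCoeff_pow hm hu hGH hH1 hG
  set L := |G.leadingCoeff|
  have hL : 1 ≤ L := Int.one_le_abs (leadingCoeff_ne_zero.mpr hG)
  have : ((p : ℤ) ^ 2 - 1) ^ G.natDegree * L ^ (m - 1) ≤ |u| ^ G.natDegree * L ^ (m - 1) :=
    calc ((p : ℤ) ^ 2 - 1) ^ G.natDegree * L ^ (m - 1)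
        ≤ ((p : ℤ) ^ 2 - 1) ^ G.natDegree * L ^ m := by
          have hB : 0 ≤ (p : ℤ) ^ 2 - 1 := by nlinarith
          exact mul_le_mul_of_nonneg_left (pow_le_pow_right₀ hL (by omega)) (by positivity)
      _ ≤ p ^ (e * G.natDegree) * |u| ^ G.natDegree := harch
      _ ≤ |u| ^ G.natDegree * L ^ (m - 1) := by
          rw [mul_comm]
          gcongr
  exact absurd (le_of_mul_le_mul_right this (by positivity))
    (not_le.mpr (pow_lt_pow_left₀ hup (abs_nonneg u) hg))

theorem irreducible_neg_C_sq_add_X_add_C_mul_X_pow (he : 2 ≤ e) (hm : 2 ≤ m)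
    (hu : ¬ (p : ℤ) ∣ u) (hup : |u| < (p : ℤ) ^ 2 - 1) :
    Irreducible (-C ((p : ℤ) ^ 2) + X + C ((p : ℤ) ^ e * u) * X ^ m) := by
  set F := -C ((p : ℤ) ^ 2) + X + C ((p : ℤ) ^ e * u) * X ^ m
  have hφ (G : ℤ[X]) (i : ℕ) :
      (G.map (Int.castRingHom (ZMod p))).coeff i ≠ 0 ↔ ¬ (p : ℤ) ∣ G.coeff i := by
    rw [coeff_map, eq_intCast, Ne, ZMod.intCast_zmod_eq_zero_iff_dvd]
  have hF : F.map (Int.castRingHom (ZMod p)) = X := by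
    have hp2 : Int.castRingHom (ZMod p) ((p : ℤ) ^ 2) = 0 := by simp
    have hpe : Int.castRingHom (ZMod p) ((p : ℤ) ^ e * u) = 0 := by
      simp [show e ≠ 0 by omega]
    simp only [F, Polynomial.map_add, Polynomial.map_neg, Polynomial.map_mul, Polynomial.map_C,
      Polynomial.map_pow, map_X, hp2, hpe, C_0, neg_zero, zero_add, zero_mul, add_zero]
  have hunit {G H : ℤ[X]} (hGH : G * H = F) (hG0 : ¬ (p : ℤ) ∣ G.coeff 0)
      (hH1 : ¬ (p : ℤ) ∣ H.coeff 1) : IsUnit G := by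
    have hG := natDegree_eq_zero_of_mul_eq he hm hu hup hGH hG0 hH1
    rw [eq_C_of_natDegree_eq_zero hG] at hGH ⊢
    have hcoeff := congrArg (coeff · 1) hGH
    simp only [coeff_C_mul, F, coeff_add, coeff_neg, coeff_C, coeff_X_one, coeff_X_pow,
      if_neg (show 1 ≠ m by omega), one_ne_zero, if_false, neg_zero, zero_add, mul_zero,
      add_zero] at hcoeff
    exact isUnit_C.mpr (.of_mul_eq_one _ hcoeff)
  refine ⟨fun h ↦ not_isUnit_X (R := ZMod p) ?_, fun G H hGH ↦ ?_⟩
  · simpa only [coe_mapRingHom, hF] using h.map (mapRingHom (Int.castRingHom (ZMod p)))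
  rcases coeff_ne_zero_of_mul_eq_X (g := G.map (Int.castRingHom (ZMod p)))
    (h := H.map (Int.castRingHom (ZMod p))) (by rw [← Polynomial.map_mul, ← hGH, hF]) with
    ⟨hG0, hH1⟩ | ⟨hH0, hG1⟩
  · exact .inl (hunit hGH.symm ((hφ _ _).mp hG0) ((hφ _ _).mp hH1))
  · exact .inr (hunit (by rw [mul_comm, hGH]) ((hφ _ _).mp hH0) ((hφ _ _).mp hG1))

end Trinomial

open Polynomial in
theorem stmt_16_general (k m : ℕ) (hm : 2 ≤ m) (hk : m + 2 ≤ k)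
    (p : ℕ) (hp : p.Prime) (d : ℕ) (hdp : d ≤ p * (p - 1))
    (hpd : ¬ p ∣ d) (ε : ℤ) (hε : ε = 1 ∨ ε = -1) :
    Irreducible
      (-C ((p : ℤ) ^ 2) + X + C (ε * (p : ℤ) ^ (k - m) * d) * X ^ m) := by
  have := Fact.mk hp
  have hεd : |ε * d| = d := by rcases hε with rfl | rfl <;> simp
  have hu : ¬ (p : ℤ) ∣ ε * d := by
    rwa [← dvd_abs, hεd, Int.natCast_dvd_natCast]
  have hup : |ε * d| < (p : ℤ) ^ 2 - 1 := by
    have hdp' : (d : ℤ) ≤ p * (p - 1) := by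
      have := Nat.cast_le (α := ℤ).mpr hdp
      push_cast [hp.one_le] at this
      exact this
    nlinarith [hp.two_le]
  rw [show ε * (p : ℤ) ^ (k - m) * d = p ^ (k - m) * (ε * d) by ring]
  exact irreducible_neg_C_sq_add_X_add_C_mul_X_pow (by omega) hm hu hup

open Polynomial in
theorem stmt_16 (k m : ℕ) (hm : 2 ≤ m) (hk : m + 2 ≤ k)
    (p : ℕ) (hp : p.Prime) (d : ℕ) (hd : 1 ≤ d) (hdp : d ≤ p * (p - 1))
    (hpd : ¬ p ∣ d) (ε : ℤ) (hε : ε = 1 ∨ ε = -1) :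
    Irreducible
      (-C ((p : ℤ) ^ 2) + X + C (ε * (p : ℤ) ^ (k - m) * d) * X ^ m) :=
  stmt_16_general k m hm hk p hp d hdp hpd ε hε
end
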